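/- arXiv:2402.00513 — 4 statements merged into one kernel-verified Lean document; each statement's English description precedes it below -/
import Mathlib

section
/- Let X be a compact metric space with generalised dyadic cubes Q and net content N^f. Let A ⊆ X be Borel and f a dimension function. If there is c > 0 such that N^f(A ∩ Q) > c·N^f(Q) for every generalised cube Q ∈ Q, then in fact N^f(A ∩ Q) = N^f(Q) for every Q ∈ Q. -/
open Metric Set ENNReal Filter MeasureTheory

/-- A dimension function: continuous, nondecreasing, vanishing at 0, positive on positives. -/
structure DimFunc (f : ℝ → ℝ) : Prop where
  continuous : Continuous f
  mono : Monotone f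
  map_zero : f 0 = 0
  pos : ∀ r : ℝ, 0 < r → 0 < f r

/-- `f` is doubling with constant `D`. -/
def DoublingWith (f : ℝ → ℝ) (D : ℝ) : Prop :=
  ∀ r : ℝ, 0 < r → f (2 * r) < D * f r

/-- `f ⪯ g`: the ratio `f/g` is monotonic on `(0,∞)` and has a positive
(possibly infinite) limit as `r → 0⁺`. -/
def DimLE (f g : ℝ → ℝ) : Prop :=
  (MonotoneOn (fun r => f r / g r) (Ioi (0:ℝ)) ∨
    AntitoneOn (fun r => f r / g r) (Ioi (0:ℝ))) ∧
  ∃ L : ℝ≥0∞, 0 < L ∧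
    Tendsto (fun r => ENNReal.ofReal (f r / g r)) (nhdsWithin 0 (Ioi (0:ℝ))) (nhds L)

/-- A countable family consisting of (open) balls. -/
def IsBallFamily {X : Type*} [MetricSpace X] (U : ℕ → Set X) : Prop :=
  ∀ i, ∃ x : X, ∃ r : ℝ, U i = ball x r

/-- Hausdorff `f`-content: infimum of `∑ f(diam Bᵢ)` over countable covers by balls. -/
noncomputable def hCont {X : Type*} [MetricSpace X] (f : ℝ → ℝ) (A : Set X) : ℝ≥0∞ :=
  ⨅ (U : ℕ → Set X) (_ : IsBallFamily U) (_ : A ⊆ ⋃ i, U i),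
    ∑' i, ENNReal.ofReal (f (diam (U i)))

/-- Hausdorff `f`-premeasure at mesh `η`. -/
noncomputable def hMeasAux {X : Type*} [MetricSpace X] (f : ℝ → ℝ) (η : ℝ) (A : Set X) : ℝ≥0∞ :=
  ⨅ (U : ℕ → Set X) (_ : IsBallFamily U) (_ : A ⊆ ⋃ i, U i)
    (_ : ∀ i, diam (U i) ≤ η),
    ∑' i, ENNReal.ofReal (f (diam (U i)))

/-- Hausdorff `f`-measure: limit of the premeasures as the mesh tends to `0`. -/
noncomputable def hMeas {X : Type*} [MetricSpace X] (f : ℝ → ℝ) (A : Set X) : ℝ≥0∞ :=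
  ⨆ (η : ℝ) (_ : 0 < η), hMeasAux f η A

/-- The Hausdorff `g`-measure is `g`-Ahlfors regular with explicit constants `c₁, c₂`. -/
def AhlforsWith (g : ℝ → ℝ) (c₁ c₂ : ℝ) (Y : Type*) [MetricSpace Y] : Prop :=
  ∀ x : Y, ∀ r : ℝ, 0 < r →
    ENNReal.ofReal (c₁ * g r) ≤ hMeas g (ball x r) ∧
    hMeas g (ball x r) ≤ ENNReal.ofReal (c₂ * g r)

/-- The space `Y` supports a `g`-Ahlfors regular Hausdorff measure `H^g`. -/
def Ahlfors (g : ℝ → ℝ) (Y : Type*) [MetricSpace Y] : Prop :=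
  ∃ c₁ c₂ : ℝ, 0 < c₁ ∧ 0 < c₂ ∧ AhlforsWith g c₁ c₂ Y

/-- The class `G^f(X)`: `G_δ` sets whose intersection with every ball has
Hausdorff `f`-content uniformly comparable to that of the ball. -/
def MemG {X : Type*} [MetricSpace X] (f : ℝ → ℝ) (A : Set X) : Prop :=
  IsGδ A ∧ ∃ c : ℝ, 0 < c ∧ ∀ (x : X) (r : ℝ), 0 < r →
    ENNReal.ofReal c * hCont f (ball x r) < hCont f (A ∩ ball x r)

/-- The limsup set of a sequence of sets. -/
def limsupSet {X : Type*} (E : ℕ → Set X) : Set X := ⋂ N, ⋃ n, ⋃ (_ : N ≤ n), E n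

/-- A system of generalised dyadic cubes (Käenmäki–Rajala–Suomala with `r = 1/4`). -/
structure CubeSystem (Y : Type*) [MetricSpace Y] where
  cubes : ℤ → Set (Set Y)
  cover : ∀ n : ℤ, ⋃₀ cubes n = univ
  pdisj : ∀ n : ℤ, (cubes n).PairwiseDisjoint id
  nested : ∀ ⦃n k : ℤ⦄, k ≤ n → ∀ q ∈ cubes n, ∀ p ∈ cubes k, q ⊆ p ∨ Disjoint q p
  comparable : ∀ n : ℤ, ∀ q ∈ cubes n, ∃ x : Y,
    ball x ((4:ℝ) ^ (-n - 2)) ⊆ q ∧ q ⊆ ball x ((4:ℝ) ^ (-n + 1))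

/-- `q` is a generalised cube of the system `C`. -/
def CubeSystem.IsCube {Y : Type*} [MetricSpace Y] (C : CubeSystem Y) (q : Set Y) : Prop :=
  ∃ n : ℤ, q ∈ C.cubes n

/-- Net `f`-content: infimum of `∑ f(diam Qᵢ)` over countable covers by generalised cubes. -/
noncomputable def netCont {Y : Type*} [MetricSpace Y] (C : CubeSystem Y)
    (f : ℝ → ℝ) (A : Set Y) : ℝ≥0∞ :=
  ⨅ (U : ℕ → Set Y) (_ : ∀ i, C.IsCube (U i)) (_ : A ⊆ ⋃ i, U i),
    ∑' i, ENNReal.ofReal (f (diam (U i)))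

/-- Weighted Hausdorff `f`-premeasure at mesh `η`: infimum of `∑ cᵢ f(|Aᵢ|)` over
weighted covers `χ_A ≤ ∑ cᵢ χ_{Aᵢ}` with `|Aᵢ| ≤ η`. -/
noncomputable def wCont {X : Type*} [MetricSpace X] (f : ℝ → ℝ) (η : ℝ≥0∞) (A : Set X) : ℝ≥0∞ :=
  ⨅ (S : ℕ → Set X) (c : ℕ → ℝ≥0∞)
    (_ : ∀ i, 0 < c i ∧ c i < ⊤)
    (_ : ∀ i, EMetric.diam (S i) ≤ η)
    (_ : ∀ x ∈ A, 1 ≤ ∑' i, (S i).indicator (fun _ => c i) x),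
    ∑' i, c i * ENNReal.ofReal (f (diam (S i)))

/-- Weighted Hausdorff `f`-measure: limit of the weighted premeasures as mesh `→ 0`. -/
noncomputable def wMeas {X : Type*} [MetricSpace X] (f : ℝ → ℝ) (A : Set X) : ℝ≥0∞ :=
  ⨆ (η : ℝ≥0∞) (_ : 0 < η), wCont f η A

/-- The singular value function `φ^f(A)`. -/
noncomputable def svf {X : Type*} [MetricSpace X] [MeasurableSpace X]
    (f : ℝ → ℝ) (A : Set X) : ℝ≥0∞ :=
  ⨆ (μ : Measure X) (_ : IsProbabilityMeasure μ) (_ : μ Aᶜ = 0),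
    ⨅ (x ∈ A) (r : ℝ) (_ : 0 < r), ENNReal.ofReal (f r) / μ (ball x r)

/-! Cover `A ∩ Q` almost optimally by cubes `Uᵢ` and single out finitely many of them. The part
of `Q` outside `⋃ Uᵢ` is covered by the maximal subcubes `M ⊆ Q` that are not covered by `⋃ Uᵢ`
and contain none of the singled-out `Uᵢ`. Since `M ⊄ Uᵢ`, every `Uᵢ` meeting `M` lies inside it,
so the density hypothesis bounds `c · N^f(M)` by the content of the remaining `Uᵢ ⊆ M`; the
maximal cubes are disjoint, so summing over them counts each remaining `Uᵢ` at most once. Hence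
`c · N^f(Q) ≤ c · (N^f(A ∩ Q) + ε) + ∑_{i remaining} N^f(Uᵢ)`, and the last sum is as small as we
like. All of this uses only that `N^f` is an outer measure, which holds because empty pieces of a
cover can be replaced by cubes of arbitrarily small content. -/

theorem Set.PairwiseDisjoint.countable_of_nonempty {α ι : Type*} [Countable α] {G : Set ι}
    {T : ι → Set α} (h : G.PairwiseDisjoint T) (hne : ∀ i ∈ G, (T i).Nonempty) : G.Countable := by
  choose g hg using hne
  refine countable_coe_iff.1 (Function.Injective.countable (f := fun i : G => g i i.2) ?_)
  intro i j hij
  replace hij : g i i.2 = g j j.2 := hij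
  exact Subtype.ext (h.elim i.2 j.2 (not_disjoint_iff.2 ⟨_, hg i i.2, hij ▸ hg j j.2⟩))

theorem Set.PairwiseDisjoint.setOf_subset {α ι : Type*} {G : Set (Set α)}
    (h : G.PairwiseDisjoint id) {U : ι → Set α} (hU : ∀ j, (U j).Nonempty) :
    G.PairwiseDisjoint fun M => {j | U j ⊆ M} := by
  intro M hM M' hM' hne
  refine Set.disjoint_left.2 fun j hj hj' => ?_
  obtain ⟨x, hx⟩ := hU j
  exact (h hM hM' hne).ne_of_mem (hj hx) (hj' hx) rfl

namespace CubeSystem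

variable {X : Type*} [MetricSpace X] (C : CubeSystem X)

lemma exists_mem_cubes (n : ℤ) (x : X) : ∃ q ∈ C.cubes n, x ∈ q :=
  mem_sUnion.1 (C.cover n ▸ mem_univ x)

lemma nonempty_of_mem {q : Set X} {n : ℤ} (hq : q ∈ C.cubes n) : q.Nonempty := by
  obtain ⟨x, hball, -⟩ := C.comparable n q hq
  exact ⟨x, hball (mem_ball_self (by positivity))⟩

lemma IsCube.nonempty {C : CubeSystem X} {q : Set X} (hq : C.IsCube q) : q.Nonempty :=
  C.nonempty_of_mem hq.choose_spec

lemma isBounded_of_mem {q : Set X} {n : ℤ} (hq : q ∈ C.cubes n) : Bornology.IsBounded q := by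
  obtain ⟨x, -, hsub⟩ := C.comparable n q hq
  exact isBounded_ball.subset hsub

lemma diam_le {q : Set X} {n : ℤ} (hq : q ∈ C.cubes n) : diam q ≤ 2 * 4 ^ (-n + 1) := by
  obtain ⟨x, -, hsub⟩ := C.comparable n q hq
  exact (diam_mono hsub isBounded_ball).trans (diam_ball (by positivity))

lemma eventually_forall_diam_lt {r : ℝ} (hr : 0 < r) :
    ∀ᶠ n in atTop, ∀ q ∈ C.cubes n, diam q < r := by
  obtain ⟨k, hk⟩ := exists_pow_lt_of_lt_one (by positivity : 0 < r / 8)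
    (by norm_num : (4 : ℝ)⁻¹ < 1)
  filter_upwards [eventually_ge_atTop (k : ℤ)] with n hn q hq
  calc diam q ≤ 2 * 4 ^ (-n + 1) := C.diam_le hq
    _ ≤ 2 * 4 ^ (-(k : ℤ) + 1) := by gcongr; norm_num
    _ = 8 * 4⁻¹ ^ k := by
        rw [zpow_add₀ (by norm_num), zpow_neg, zpow_natCast, zpow_one, inv_pow]; ring
    _ < r := by linarith

lemma subset_or_subset_of_nonempty_inter {p q : Set X} (hp : C.IsCube p) (hq : C.IsCube q)
    (h : (p ∩ q).Nonempty) : p ⊆ q ∨ q ⊆ p := by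
  obtain ⟨n, hn⟩ := hp
  obtain ⟨m, hm⟩ := hq
  rcases le_total m n with hmn | hnm
  · exact Or.inl ((C.nested hmn p hn q hm).resolve_right (not_disjoint_iff_nonempty_inter.2 h))
  · refine Or.inr ((C.nested hnm q hm p hn).resolve_right ?_)
    exact not_disjoint_iff_nonempty_inter.2 (inter_comm p q ▸ h)

lemma lt_of_mem_of_ssubset {p q : Set X} {n m : ℤ} (hp : p ∈ C.cubes n) (hq : q ∈ C.cubes m)
    (h : p ⊂ q) : m < n := by
  by_contra! hnm
  rcases C.nested hnm q hq p hp with hqp | hdisj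
  · exact h.not_subset hqp
  · obtain ⟨x, hx⟩ := C.nonempty_of_mem hp
    exact hdisj.ne_of_mem (h.subset hx) hx rfl

lemma exists_isCube_mem_subset_forall_not_mem {q : Set X} (hq : C.IsCube q) {x : X}
    (hx : x ∈ q) (s : Finset X) (hs : x ∉ s) :
    ∃ R, C.IsCube R ∧ x ∈ R ∧ R ⊆ q ∧ ∀ y ∈ s, y ∉ R := by
  obtain ⟨m, hm⟩ := hq
  have hfar : ∀ y ∈ s, ∀ᶠ n in atTop, ∀ p ∈ C.cubes n, x ∈ p → y ∉ p := fun y hy =>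
    (C.eventually_forall_diam_lt (dist_pos.2 (ne_of_mem_of_not_mem hy hs).symm)).mono
      fun n hn p hp hxp hyp => (dist_le_diam_of_mem (C.isBounded_of_mem hp) hxp hyp).not_gt
        (hn p hp)
  obtain ⟨n, hmn, hn⟩ := ((eventually_ge_atTop m).and (s.eventually_all.2 hfar)).exists
  obtain ⟨R, hR, hxR⟩ := C.exists_mem_cubes n x
  refine ⟨R, ⟨n, hR⟩, hxR, ?_, fun y hy => hn y hy R hR hxR⟩
  exact (C.nested hmn R hR q hm).resolve_right (not_disjoint_iff.2 ⟨x, hxR, hx⟩)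

lemma exists_subset_maximal {q : Set X} (hq : C.IsCube q) {F : Set (Set X)}
    (hF : ∀ R ∈ F, C.IsCube R ∧ R ⊆ q) {R : Set X} (hR : R ∈ F) :
    ∃ M, R ⊆ M ∧ Maximal (· ∈ F) M := by
  obtain ⟨m, hm⟩ := hq
  have maximal_of_le : ∀ R ∈ F, ∀ n ≤ m, R ∈ C.cubes n → Maximal (· ∈ F) R := by
    intro R hR n hnm hRn
    obtain ⟨x, hx⟩ := C.nonempty_of_mem hRn
    have hqR : q ⊆ R := (C.nested hnm q hm R hRn).resolve_right
      (not_disjoint_iff.2 ⟨x, (hF R hR).2 hx, hx⟩)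
    exact ⟨hR, fun P hP _ => (hF P hP).2.trans hqR⟩
  suffices ∀ N : ℕ, ∀ R ∈ F, ∀ n ≤ m + N, R ∈ C.cubes n → ∃ M, R ⊆ M ∧ Maximal (· ∈ F) M by
    obtain ⟨n, hn⟩ := (hF R hR).1
    exact this (n - m).toNat R hR n (by omega) hn
  intro N
  induction N with
  | zero => exact fun R hR n hn hRn => ⟨R, subset_rfl, maximal_of_le R hR n (by simpa using hn) hRn⟩
  | succ N ih =>
    intro R hR n hn hRn
    by_cases hRmax : Maximal (· ∈ F) R
    · exact ⟨R, subset_rfl, hRmax⟩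
    obtain ⟨P, hRP, hP⟩ := (not_maximal_subset_iff hR).1 hRmax
    obtain ⟨k, hk⟩ := (hF P hP).1
    have hkn : k < n := C.lt_of_mem_of_ssubset hRn hk hRP
    have hmn : m < n := lt_of_not_ge fun hnm => hRmax (maximal_of_le R hR n hnm hRn)
    obtain ⟨M, hPM, hM⟩ := ih P hP k (by push_cast at hn; omega) hk
    exact ⟨M, hRP.subset.trans hPM, hM⟩

lemma pairwiseDisjoint_maximal {F : Set (Set X)} (hF : ∀ R ∈ F, C.IsCube R) :
    {M | Maximal (· ∈ F) M}.PairwiseDisjoint id := by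
  intro M hM M' hM' hne
  by_contra hnd
  rcases C.subset_or_subset_of_nonempty_inter (hF M hM.prop) (hF M' hM'.prop)
    (not_disjoint_iff_nonempty_inter.1 hnd) with h | h
  · exact hne (hM.eq_of_subset hM'.prop h)
  · exact hne (hM'.eq_of_subset hM.prop h).symm

def gapCubes (q : Set X) (U : ℕ → Set X) (s : Finset ℕ) : Set (Set X) :=
  {R | C.IsCube R ∧ R ⊆ q ∧ ¬ R ⊆ ⋃ i, U i ∧ ∀ j ∈ s, ¬ U j ⊆ R}

lemma subset_iUnion_union_sUnion_maximal_gapCubes {q : Set X} (hq : C.IsCube q)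
    {U : ℕ → Set X} (hU : ∀ i, C.IsCube (U i)) (s : Finset ℕ) :
    q ⊆ (⋃ i, U i) ∪ ⋃₀ {M | Maximal (· ∈ C.gapCubes q U s) M} := by
  classical
  intro x hxq
  by_cases hxU : x ∈ ⋃ i, U i
  · exact Or.inl hxU
  choose y hy using fun j => (hU j).nonempty
  have hxy : x ∉ s.image y := by
    simp only [Finset.mem_image, not_exists, not_and]
    exact fun j _ hyx => hxU (mem_iUnion.2 ⟨j, hyx ▸ hy j⟩)
  obtain ⟨R, hR, hxR, hRq, hRy⟩ := C.exists_isCube_mem_subset_forall_not_mem hq hxq _ hxy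
  have hRgap : R ∈ C.gapCubes q U s := ⟨hR, hRq, fun h => hxU (h hxR),
    fun j hj hjR => hRy (y j) (Finset.mem_image_of_mem y hj) (hjR (hy j))⟩
  obtain ⟨M, hRM, hM⟩ := C.exists_subset_maximal hq (fun R hR => ⟨hR.1, hR.2.1⟩) hRgap
  exact Or.inr ⟨M, hM, hRM hxR⟩

lemma inter_subset_biUnion_of_mem_gapCubes {A q : Set X} {U : ℕ → Set X}
    (hU : ∀ i, C.IsCube (U i)) (hcov : A ∩ q ⊆ ⋃ i, U i) {s : Finset ℕ} {M : Set X}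
    (hM : M ∈ C.gapCubes q U s) : A ∩ M ⊆ ⋃ j ∈ {j | U j ⊆ M}, U j := by
  obtain ⟨hM, hMq, hMU, -⟩ := hM
  rintro a ⟨haA, haM⟩
  obtain ⟨j, haj⟩ := mem_iUnion.1 (hcov ⟨haA, hMq haM⟩)
  refine mem_biUnion ((C.subset_or_subset_of_nonempty_inter (hU j) hM ⟨a, haj, haM⟩).resolve_right
    fun hMj => hMU (hMj.trans (subset_iUnion U j))) haj

theorem mul_measure_le_of_density (μ : OuterMeasure X) {A : Set X} {c : ℝ≥0∞}
    (hdens : ∀ p, C.IsCube p → c * μ p < μ (A ∩ p)) {q : Set X} (hq : C.IsCube q)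
    {U : ℕ → Set X} (hU : ∀ i, C.IsCube (U i)) (hcov : A ∩ q ⊆ ⋃ i, U i) (s : Finset ℕ) :
    c * μ q ≤ c * ∑' i, μ (U i) + ∑' j : {j // j ∉ s}, μ (U j) := by
  set G : Set (Set X) := {M | Maximal (· ∈ C.gapCubes q U s) M}
  set T : Set X → Set ℕ := fun M => {j | U j ⊆ M}
  have hAT : ∀ M ∈ G, A ∩ M ⊆ ⋃ j ∈ T M, U j := fun M hM =>
    C.inter_subset_biUnion_of_mem_gapCubes hU hcov hM.prop
  have hGdisj : G.PairwiseDisjoint T :=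
    (C.pairwiseDisjoint_maximal fun R hR => hR.1).setOf_subset fun j => (hU j).nonempty
  have hGc : G.Countable := hGdisj.countable_of_nonempty fun M hM => by
    obtain ⟨a, ha⟩ : (A ∩ M).Nonempty :=
      nonempty_iff_ne_empty.2 fun hemp => by simpa [hemp] using hdens M hM.prop.1
    obtain ⟨j, hj, -⟩ := mem_iUnion₂.1 (hAT M hM ha)
    exact ⟨j, hj⟩
  have hTs : ⋃ M ∈ G, T M ⊆ {j | j ∉ s} := iUnion₂_subset fun M hM j hj hjs =>
    hM.prop.2.2.2 j hjs hj
  calc c * μ q ≤ c * (∑' i, μ (U i) + ∑' M : G, μ M) := by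
        gcongr
        refine (μ.mono (C.subset_iUnion_union_sUnion_maximal_gapCubes hq hU s)).trans
          ((measure_union_le _ _).trans (add_le_add (measure_iUnion_le _) ?_))
        rw [sUnion_eq_biUnion]
        exact measure_biUnion_le μ hGc id
    _ = c * ∑' i, μ (U i) + ∑' M : G, c * μ M := by rw [mul_add, ENNReal.tsum_mul_left]
    _ ≤ c * ∑' i, μ (U i) + ∑' M : G, ∑' j : T M, μ (U j) := by
        gcongr with M
        exact (hdens M M.2.prop.1).le.trans ((μ.mono (hAT M M.2)).trans
          (measure_biUnion_le μ (to_countable _) _))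
    _ = c * ∑' i, μ (U i) + ∑' j : ⋃ M ∈ G, T M, μ (U j) := by
        rw [ENNReal.tsum_biUnion' (f := fun j => μ (U j)) hGdisj]
    _ ≤ c * ∑' i, μ (U i) + ∑' j : {j // j ∉ s}, μ (U j) := by
        gcongr
        exact ENNReal.tsum_mono_subtype (fun j => μ (U j)) hTs

theorem measure_inter_eq_of_density (μ : OuterMeasure X)
    (hμ : ∀ s a, μ s < a →
      ∃ U : ℕ → Set X, (∀ i, C.IsCube (U i)) ∧ s ⊆ ⋃ i, U i ∧ ∑' i, μ (U i) < a)
    {A : Set X} {c : ℝ≥0∞} (hc0 : c ≠ 0) (hc : c ≠ ⊤)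
    (hdens : ∀ p, C.IsCube p → c * μ p < μ (A ∩ p)) {q : Set X} (hq : C.IsCube q) :
    μ (A ∩ q) = μ q := by
  refine le_antisymm (μ.mono inter_subset_right)
    (ENNReal.le_of_forall_pos_le_add fun ε hε hfin => ?_)
  set E : ℝ≥0∞ := ↑(ε / 2)
  have hE : E ≠ 0 := ENNReal.coe_ne_zero.2 (half_pos hε).ne'
  obtain ⟨U, hU, hcov, hsum⟩ := hμ (A ∩ q) _ (ENNReal.lt_add_right hfin.ne hE)
  have hsum_ne_top : ∑' i, μ (U i) ≠ ⊤ :=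
    (hsum.trans (ENNReal.add_lt_top.2 ⟨hfin, ENNReal.coe_lt_top⟩)).ne
  obtain ⟨s, hs⟩ := ((ENNReal.tendsto_tsum_compl_atTop_zero hsum_ne_top).eventually
    (gt_mem_nhds (ENNReal.mul_pos hc0 hE).bot_lt)).exists
  rw [← ENNReal.mul_le_mul_iff_right hc0 hc]
  calc c * μ q ≤ c * ∑' i, μ (U i) + ∑' j : {j // j ∉ s}, μ (U j) :=
        C.mul_measure_le_of_density μ hdens hq hU hcov s
    _ ≤ c * (μ (A ∩ q) + E) + c * E := by gcongr
    _ = c * (μ (A ∩ q) + ε) := by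
        rw [← mul_add, add_assoc, ← ENNReal.coe_add, add_halves]

variable (f : ℝ → ℝ)

open Classical in
noncomputable def cubeCost (s : Set X) : ℝ≥0∞ :=
  if s = ∅ then 0 else if C.IsCube s then ENNReal.ofReal (f (diam s)) else ⊤

lemma cubeCost_empty : C.cubeCost f ∅ = 0 := if_pos rfl

noncomputable def netContent : OuterMeasure X :=
  OuterMeasure.ofFunction (C.cubeCost f) (C.cubeCost_empty f)

lemma cubeCost_of_isCube {q : Set X} (hq : C.IsCube q) :
    C.cubeCost f q = ENNReal.ofReal (f (diam q)) := by
  rw [cubeCost, if_neg hq.nonempty.ne_empty, if_pos hq]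

lemma netContent_le {q : Set X} (hq : C.IsCube q) :
    C.netContent f q ≤ ENNReal.ofReal (f (diam q)) :=
  (OuterMeasure.ofFunction_le q).trans_eq (C.cubeCost_of_isCube f hq)

variable {f}

lemma exists_isCube_ofReal_lt [Nonempty X] (hf : ContinuousAt f 0) (hf0 : f 0 = 0)
    {ε : ℝ≥0∞} (hε : 0 < ε) : ∃ q, C.IsCube q ∧ ENNReal.ofReal (f (diam q)) < ε := by
  have hlim : Tendsto (fun r => ENNReal.ofReal (f r)) (nhds 0) (nhds 0) := by
    simpa [hf0, Function.comp_def] using (ENNReal.continuous_ofReal.tendsto _).comp hf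
  obtain ⟨δ, hδ, hsmall⟩ := Metric.eventually_nhds_iff.1 (hlim.eventually (gt_mem_nhds hε))
  obtain ⟨n, hn⟩ := (C.eventually_forall_diam_lt hδ).exists
  obtain ⟨q, hq, -⟩ := C.exists_mem_cubes n (Classical.arbitrary X)
  refine ⟨q, ⟨n, hq⟩, hsmall ?_⟩
  rw [Real.dist_eq, sub_zero, abs_of_nonneg diam_nonneg]
  exact hn q hq

lemma netCont_le_tsum_cubeCost [Nonempty X] (hf : ContinuousAt f 0) (hf0 : f 0 = 0)
    {s : Set X} {t : ℕ → Set X} (ht : s ⊆ ⋃ i, t i) :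
    netCont C f s ≤ ∑' i, C.cubeCost f (t i) := by
  classical
  by_cases hcost : ∀ i, t i = ∅ ∨ C.IsCube (t i)
  swap
  · push Not at hcost
    obtain ⟨i, hne, hi⟩ := hcost
    refine le_top.trans_eq (ENNReal.tsum_eq_top_of_eq_top ⟨i, ?_⟩).symm
    rw [cubeCost, if_neg hne.ne_empty, if_neg hi]
  refine ENNReal.le_of_forall_pos_le_add fun ε hε _ => ?_
  obtain ⟨δ, hδ, hδsum⟩ := ENNReal.exists_pos_sum_of_countable (ENNReal.coe_ne_zero.2 hε.ne') ℕ
  choose pad hpad hpad_lt using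
    fun i => C.exists_isCube_ofReal_lt hf hf0 (ENNReal.coe_pos.2 (hδ i))
  set V : ℕ → Set X := fun i => if t i = ∅ then pad i else t i
  have hV : ∀ i, C.IsCube (V i) ∧ t i ⊆ V i ∧
      ENNReal.ofReal (f (diam (V i))) ≤ C.cubeCost f (t i) + δ i := by
    intro i
    by_cases hti : t i = ∅
    · simp only [V, if_pos hti, hti, cubeCost_empty, empty_subset, zero_add]
      exact ⟨hpad i, trivial, (hpad_lt i).le⟩
    · have hcube := (hcost i).resolve_left hti
      simp only [V, if_neg hti]
      exact ⟨hcube, subset_rfl, (C.cubeCost_of_isCube f hcube).ge.trans le_self_add⟩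
  calc netCont C f s ≤ ∑' i, ENNReal.ofReal (f (diam (V i))) :=
        iInf₂_le_of_le V (fun i => (hV i).1)
          (iInf_le _ (ht.trans (iUnion_mono fun i => (hV i).2.1)))
    _ ≤ ∑' i, (C.cubeCost f (t i) + δ i) := ENNReal.tsum_le_tsum fun i => (hV i).2.2
    _ ≤ ∑' i, C.cubeCost f (t i) + ε := by
        rw [ENNReal.tsum_add]
        exact add_le_add_right hδsum.le _

theorem netCont_eq_netContent [Nonempty X] (hf : ContinuousAt f 0) (hf0 : f 0 = 0) :
    netCont C f = C.netContent f := by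
  funext s
  refine le_antisymm ?_ (le_iInf₂ fun U hU => le_iInf fun hcov => ?_)
  · rw [netContent, OuterMeasure.ofFunction_apply]
    exact le_iInf₂ fun t ht => C.netCont_le_tsum_cubeCost hf hf0 ht
  · exact (OuterMeasure.mono _ hcov).trans ((measure_iUnion_le _).trans
      (ENNReal.tsum_le_tsum fun i => C.netContent_le f (hU i)))

lemma exists_isCube_cover_tsum_lt [Nonempty X] (hf : ContinuousAt f 0) (hf0 : f 0 = 0)
    {s : Set X} {a : ℝ≥0∞} (h : C.netContent f s < a) :
    ∃ U : ℕ → Set X, (∀ i, C.IsCube (U i)) ∧ s ⊆ ⋃ i, U i ∧ ∑' i, C.netContent f (U i) < a := by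
  rw [← C.netCont_eq_netContent hf hf0, netCont] at h
  simp only [iInf_lt_iff] at h
  obtain ⟨U, hU, hcov, hsum⟩ := h
  exact ⟨U, hU, hcov, (ENNReal.tsum_le_tsum fun i => C.netContent_le f (hU i)).trans_lt hsum⟩

end CubeSystem

theorem stmt6_general {X : Type*} [MetricSpace X]
    (C : CubeSystem X) (f : ℝ → ℝ) (hf : DimFunc f)
    (A : Set X) (c : ℝ) (hc : 0 < c)
    (h : ∀ q : Set X, C.IsCube q →
      ENNReal.ofReal c * netCont C f q < netCont C f (A ∩ q)) :
    ∀ q : Set X, C.IsCube q → netCont C f (A ∩ q) = netCont C f q := by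
  intro q hq
  have : Nonempty X := ⟨hq.nonempty.some⟩
  have hcont := hf.continuous.continuousAt (x := 0)
  rw [C.netCont_eq_netContent hcont hf.map_zero] at h ⊢
  exact C.measure_inter_eq_of_density _ (fun s a => C.exists_isCube_cover_tsum_lt hcont hf.map_zero)
    (ENNReal.ofReal_pos.2 hc).ne' ENNReal.ofReal_ne_top h hq

/-- a uniform net-content lower bound `N^f(A ∩ Q) > c·N^f(Q)` over all
generalised cubes upgrades itself to equality `N^f(A ∩ Q) = N^f(Q)`. -/
theorem stmt6 {X : Type*} [MetricSpace X] [CompactSpace X]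
    [MeasurableSpace X] [BorelSpace X]
    (C : CubeSystem X) (f : ℝ → ℝ) (hf : DimFunc f)
    (A : Set X) (hA : MeasurableSet A) (c : ℝ) (hc : 0 < c)
    (h : ∀ q : Set X, C.IsCube q →
      ENNReal.ofReal c * netCont C f q < netCont C f (A ∩ q)) :
    ∀ q : Set X, C.IsCube q → netCont C f (A ∩ q) = netCont C f q :=
  stmt6_general C f hf A c hc h
end

section
/- Let X be a compact metric space supporting a g-Ahlfors regular measure H^g (g doubling), with generalised dyadic cubes Q. Let A ⊆ X be Borel. If there exists c > 0 such that H^g(A ∩ Q) > c·H^g(Q) for every generalised cube Q, then H^g(A) = H^g(X). -/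
open Metric Set ENNReal Filter MeasureTheory

/-!
`hMeas g` is Mathlib's metric outer measure `mkMetric'` built from the gauge that charges a ball
`B` with `g (diam B)` and every other set with `∞`, so its restriction `μ` to Borel sets is a
measure agreeing with `H^g` on measurable sets. Ahlfors regularity together with the doubling of
`g` makes `μ` locally finite and uniformly locally doubling, so Lebesgue's density theorem holds:
almost every point of `Aᶜ` has `Aᶜ`-density tending to one along closed balls shrinking to it.
A cube of level `n` contains a ball of radius `4^(-n-2)` and lies in one of radius `4^(-n+1)`,
so the hypothesis gives `A` a density at least `c c₁ / (c₂ D⁷)` in the larger balls, around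
every point and at every scale. Hence `μ Aᶜ = 0`.
-/

open OuterMeasure
open scoped Topology

section HausdorffAsMetricMeasure

variable {Y : Type*} [MetricSpace Y] {g : ℝ → ℝ}

open scoped Classical in
noncomputable def ballGauge (g : ℝ → ℝ) (s : Set Y) : ℝ≥0∞ :=
  if ∃ x r, s = ball x r then ENNReal.ofReal (g (diam s)) else ∞

lemma ballGauge_of_ball {s : Set Y} (hs : ∃ x r, s = ball x r) :
    ballGauge g s = ENNReal.ofReal (g (diam s)) :=
  if_pos hs

lemma ediam_le_ofReal_iff_of_ball {s : Set Y} (hs : ∃ x r, s = ball x r) {η : ℝ}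
    (hη : 0 ≤ η) :
    ediam s ≤ ENNReal.ofReal η ↔ diam s ≤ η := by
  obtain ⟨x, r, rfl⟩ := hs
  exact ENNReal.le_ofReal_iff_toReal_le isBounded_ball.ediam_ne_top hη

/-- `hs` bounds the cost of `s` in `boundedBy_apply` for `mkMetric'.pre (ballGauge g)`;
the empty set counts as the ball `ball x 0`. -/
lemma ball_and_diam_le_of_pre_cost_ne_top [Nonempty Y] (hg0 : g 0 = 0) {η : ℝ} (hη : 0 ≤ η)
    {s : Set Y}
    (hs : (⨆ _ : s.Nonempty,
      extend (fun t (_ : ediam t ≤ ENNReal.ofReal η) => ballGauge g t) s) ≠ ∞) :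
    (∃ x r, s = ball x r) ∧ diam s ≤ η ∧ ENNReal.ofReal (g (diam s)) ≤
      ⨆ _ : s.Nonempty,
        extend (fun t (_ : ediam t ≤ ENNReal.ofReal η) => ballGauge g t) s := by
  rcases s.eq_empty_or_nonempty with rfl | hne
  · obtain ⟨x⟩ := ‹Nonempty Y›
    exact ⟨⟨x, 0, ball_zero.symm⟩, by simpa using hη, by simp [hg0]⟩
  rw [iSup_pos hne] at hs ⊢
  have hdiam : ediam s ≤ ENNReal.ofReal η := by
    by_contra h
    exact hs (extend_eq_top _ h)
  rw [extend_eq (fun t (_ : ediam t ≤ ENNReal.ofReal η) => ballGauge g t) hdiam] at hs ⊢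
  have hball : ∃ x r, s = ball x r := by
    by_contra h
    exact hs (if_neg h)
  exact ⟨hball, (ediam_le_ofReal_iff_of_ball hball hη).1 hdiam, (ballGauge_of_ball hball).ge⟩

lemma hMeasAux_eq_mkMetric'_pre [Nonempty Y] (hg0 : g 0 = 0) {η : ℝ} (hη : 0 < η)
    (A : Set Y) :
    hMeasAux g η A = mkMetric'.pre (ballGauge g) (ENNReal.ofReal η) A := by
  apply le_antisymm
  · rw [mkMetric'.pre, boundedBy_apply]
    refine le_iInf₂ fun t ht => ?_
    by_cases htop : ∑' n, (⨆ _ : (t n).Nonempty,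
        extend (fun s (_ : ediam s ≤ ENNReal.ofReal η) => ballGauge g s) (t n)) = ∞
    · exact htop ▸ le_top
    choose hball hdiam hle using fun n =>
      ball_and_diam_le_of_pre_cost_ne_top hg0 hη.le (ENNReal.ne_top_of_tsum_ne_top htop n)
    calc hMeasAux g η A ≤ ∑' n, ENNReal.ofReal (g (diam (t n))) :=
          iInf_le_of_le t <| iInf_le_of_le hball <| iInf_le_of_le ht <| iInf_le_of_le hdiam le_rfl
      _ ≤ _ := ENNReal.tsum_le_tsum hle
  · refine le_iInf fun U => le_iInf fun hU => le_iInf fun hcov => le_iInf fun hdiam => ?_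
    calc mkMetric'.pre (ballGauge g) (ENNReal.ofReal η) A
        ≤ mkMetric'.pre (ballGauge g) (ENNReal.ofReal η) (⋃ i, U i) := measure_mono hcov
      _ ≤ ∑' i, mkMetric'.pre (ballGauge g) (ENNReal.ofReal η) (U i) := measure_iUnion_le U
      _ ≤ ∑' i, ENNReal.ofReal (g (diam (U i))) := ENNReal.tsum_le_tsum fun i =>
          (mkMetric'.pre_le ((ediam_le_ofReal_iff_of_ball (hU i) hη.le).2 (hdiam i))).trans
            (ballGauge_of_ball (hU i)).le

lemma hMeas_eq_mkMetric' [Nonempty Y] (hg0 : g 0 = 0) (A : Set Y) :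
    hMeas g A = OuterMeasure.mkMetric' (ballGauge g) A := by
  simp only [hMeas, OuterMeasure.mkMetric', OuterMeasure.iSup_apply]
  apply le_antisymm
  · refine iSup₂_le fun η hη => ?_
    rw [hMeasAux_eq_mkMetric'_pre hg0 hη]
    exact le_iSup₂ (f := fun r (_ : 0 < r) => mkMetric'.pre (ballGauge g) r A)
      (ENNReal.ofReal η) (ENNReal.ofReal_pos.2 hη)
  · refine iSup₂_le fun r hr => ?_
    obtain ⟨η, hη, hηr⟩ : ∃ η : ℝ, 0 < η ∧ ENNReal.ofReal η ≤ r := by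
      rcases eq_or_ne r ⊤ with rfl | hr'
      · exact ⟨1, one_pos, le_top⟩
      · exact ⟨r.toReal, ENNReal.toReal_pos hr.ne' hr', (ENNReal.ofReal_toReal hr').le⟩
    calc mkMetric'.pre (ballGauge g) r A
        ≤ mkMetric'.pre (ballGauge g) (ENNReal.ofReal η) A := mkMetric'.mono_pre _ hηr A
      _ = hMeasAux g η A := (hMeasAux_eq_mkMetric'_pre hg0 hη A).symm
      _ ≤ ⨆ (η : ℝ) (_ : 0 < η), hMeasAux g η A :=
          le_iSup₂ (f := fun η (_ : 0 < η) => hMeasAux g η A) η hη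

lemma hMeas_mono [Nonempty Y] (hg0 : g 0 = 0) {s t : Set Y} (hst : s ⊆ t) :
    hMeas g s ≤ hMeas g t := by
  simpa only [hMeas_eq_mkMetric' hg0] using measure_mono hst

lemma mkMetric'_ballGauge_apply [MeasurableSpace Y] [BorelSpace Y] [Nonempty Y]
    (hg0 : g 0 = 0) {s : Set Y} (hs : MeasurableSet s) :
    Measure.mkMetric' (ballGauge g) s = hMeas g s := by
  rw [hMeas_eq_mkMetric' hg0]
  exact toMeasure_apply _ _ hs

end HausdorffAsMetricMeasure

section Doubling

variable {g : ℝ → ℝ} {D : ℝ}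

lemma DoublingWith.pos (hgD : DoublingWith g D) (hg : ∀ r, 0 < r → 0 < g r) : 0 < D :=
  pos_of_mul_pos_left ((hg _ (by norm_num : (0 : ℝ) < 2 * 1)).trans (hgD 1 one_pos))
    (hg 1 one_pos).le

lemma DoublingWith.le_pow_mul (hgD : DoublingWith g D) (hD : 0 ≤ D) (k : ℕ) {s : ℝ}
    (hs : 0 < s) : g (2 ^ k * s) ≤ D ^ k * g s := by
  induction k with
  | zero => simp
  | succ k ih =>
    calc g (2 ^ (k + 1) * s) = g (2 * (2 ^ k * s)) := by ring_nf
      _ ≤ D * g (2 ^ k * s) := (hgD _ (by positivity)).le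
      _ ≤ D * (D ^ k * g s) := mul_le_mul_of_nonneg_left ih hD
      _ = D ^ (k + 1) * g s := by ring

end Doubling

section BallBounds

variable {Y : Type*} [MetricSpace Y] [MeasurableSpace Y] {μ : Measure Y} {g : ℝ → ℝ}
  {c₁ c₂ D : ℝ}

lemma measure_closedBall_two_pow_mul_le
    (hup : ∀ x r, 0 < r → μ (ball x r) ≤ ENNReal.ofReal (c₂ * g r)) (hc₂ : 0 ≤ c₂)
    (hgD : DoublingWith g D) (hD : 0 ≤ D) (x : Y) (k : ℕ) {s : ℝ} (hs : 0 < s) :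
    μ (closedBall x (2 ^ k * s)) ≤ ENNReal.ofReal (c₂ * (D ^ (k + 1) * g s)) :=
  calc μ (closedBall x (2 ^ k * s)) ≤ μ (ball x (2 ^ (k + 1) * s)) :=
        measure_mono (closedBall_subset_ball (by
          rw [pow_succ]; nlinarith [(by positivity : (0 : ℝ) < 2 ^ k)]))
    _ ≤ ENNReal.ofReal (c₂ * g (2 ^ (k + 1) * s)) := hup _ _ (by positivity)
    _ ≤ ENNReal.ofReal (c₂ * (D ^ (k + 1) * g s)) :=
        ENNReal.ofReal_le_ofReal (mul_le_mul_of_nonneg_left (hgD.le_pow_mul hD _ hs) hc₂)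

lemma isUnifLocDoublingMeasure_of_ball_bounds
    (hlow : ∀ x r, 0 < r → ENNReal.ofReal (c₁ * g r) ≤ μ (ball x r))
    (hup : ∀ x r, 0 < r → μ (ball x r) ≤ ENNReal.ofReal (c₂ * g r)) (hc₁ : 0 < c₁)
    (hc₂ : 0 ≤ c₂) (hgD : DoublingWith g D) (hD : 0 ≤ D) :
    IsUnifLocDoublingMeasure μ := by
  refine ⟨⟨Real.toNNReal (c₂ * D ^ 2 / c₁), ?_⟩⟩
  filter_upwards [self_mem_nhdsWithin] with ε (hε : 0 < ε) x
  calc μ (closedBall x (2 * ε)) ≤ ENNReal.ofReal (c₂ * (D ^ 2 * g ε)) := by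
        simpa using measure_closedBall_two_pow_mul_le hup hc₂ hgD hD x 1 hε
    _ = ENNReal.ofReal (c₂ * D ^ 2 / c₁) * ENNReal.ofReal (c₁ * g ε) := by
        rw [← ENNReal.ofReal_mul (by positivity)]
        congr 1
        field_simp
    _ ≤ Real.toNNReal (c₂ * D ^ 2 / c₁) * μ (closedBall x ε) :=
        mul_le_mul_right ((hlow x ε hε).trans (measure_mono ball_subset_closedBall)) _

end BallBounds

section Density

variable {α : Type*} [MeasurableSpace α] {μ : Measure α} {A B : Set α} {ε : ℝ≥0∞}

lemma measure_compl_inter_div_le (hA : MeasurableSet A) (h : ε * μ B ≤ μ (A ∩ B)) :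
    μ (Aᶜ ∩ B) / μ B ≤ 1 - ε := by
  rcases eq_top_or_lt_top (μ B) with hB | hB
  · simp [hB]
  refine ENNReal.div_le_of_le_mul ?_
  have hsplit : μ (B \ A) + μ (A ∩ B) = μ B := by
    rw [add_comm, inter_comm]
    exact measure_inter_add_sdiff B hA
  calc μ (Aᶜ ∩ B) = μ B - μ (A ∩ B) := by
        rw [← sdiff_eq_compl_inter]
        exact ENNReal.eq_sub_of_add_eq ((measure_mono inter_subset_right).trans_lt hB).ne hsplit
    _ ≤ μ B - ε * μ B := tsub_le_tsub_left h _
    _ = (1 - ε) * μ B := by rw [ENNReal.sub_mul fun _ _ => hB.ne, one_mul]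

theorem measure_compl_eq_zero_of_forall_closedBall_density_ge [PseudoMetricSpace α]
    [SecondCountableTopology α] [BorelSpace α] [IsUnifLocDoublingMeasure μ]
    [IsLocallyFiniteMeasure μ] (hA : MeasurableSet A)
    (hε : ε ≠ 0) {δ : ℕ → ℝ} (hδ : Tendsto δ atTop (𝓝[>] 0))
    (hdense : ∀ n x, ∃ y, x ∈ closedBall y (δ n) ∧
      ε * μ (closedBall y (δ n)) ≤ μ (A ∩ closedBall y (δ n))) :
    μ Aᶜ = 0 := by
  have hnone : ∀ᵐ x ∂μ.restrict Aᶜ, False := by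
    filter_upwards [IsUnifLocDoublingMeasure.ae_tendsto_measure_inter_div μ Aᶜ 1] with x hx
    choose y hxy hy using fun n => hdense n x
    have hlim := hx y δ hδ (Eventually.of_forall fun n => by simpa using hxy n)
    have hle : (1 : ℝ≥0∞) ≤ 1 - ε :=
      le_of_tendsto' hlim fun n => measure_compl_inter_div_le hA (hy n)
    exact (ENNReal.sub_lt_self one_ne_top one_ne_zero hε).not_ge hle
  exact Measure.restrict_eq_zero.1 (ae_eq_bot.1 (eventually_false_iff_eq_bot.1 hnone))

end Density

lemma four_zpow_neg_add_one (n : ℤ) : (4 : ℝ) ^ (-n + 1) = 2 ^ 6 * 4 ^ (-n - 2) := by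
  rw [show -n + 1 = (-n - 2) + 3 by ring, zpow_add₀ (by norm_num)]
  norm_num
  ring

lemma tendsto_four_zpow_neg_add_one :
    Tendsto (fun n : ℕ => (4 : ℝ) ^ (-(n : ℤ) + 1)) atTop (𝓝[>] 0) := by
  have hgeom : (fun n : ℕ => (4 : ℝ) ^ (-(n : ℤ) + 1)) = fun n => 4 * 4⁻¹ ^ n := by
    ext n
    rw [zpow_add₀ (by norm_num), zpow_neg, zpow_natCast, zpow_one, inv_pow, mul_comm]
  rw [hgeom]
  refine tendsto_nhdsWithin_iff.2 ⟨?_, Eventually.of_forall fun n => mem_Ioi.2 (by positivity)⟩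
  simpa using (_root_.tendsto_pow_atTop_nhds_zero_of_lt_one (r := (4 : ℝ)⁻¹) (by norm_num)
    (by norm_num)).const_mul 4

lemma CubeSystem.exists_mem_cube {Y : Type*} [MetricSpace Y] (C : CubeSystem Y) (n : ℤ)
    (x : Y) :
    ∃ q ∈ C.cubes n, x ∈ q :=
  mem_sUnion.1 (by rw [C.cover n]; exact mem_univ x)

section Cubes

variable {Y : Type*} [MetricSpace Y] [MeasurableSpace Y] [BorelSpace Y] [Nonempty Y]
  {g : ℝ → ℝ} {c₁ c₂ D : ℝ}

lemma AhlforsWith.ofReal_le_mkMetric'_ball (hAW : AhlforsWith g c₁ c₂ Y) (hg0 : g 0 = 0)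
    (x : Y) (r : ℝ) (hr : 0 < r) :
    ENNReal.ofReal (c₁ * g r) ≤ Measure.mkMetric' (ballGauge g) (ball x r) :=
  (hAW x r hr).1.trans_eq (mkMetric'_ballGauge_apply hg0 measurableSet_ball).symm

lemma AhlforsWith.mkMetric'_ball_le (hAW : AhlforsWith g c₁ c₂ Y) (hg0 : g 0 = 0)
    (x : Y) (r : ℝ) (hr : 0 < r) :
    Measure.mkMetric' (ballGauge g) (ball x r) ≤ ENNReal.ofReal (c₂ * g r) :=
  (mkMetric'_ballGauge_apply hg0 measurableSet_ball).trans_le (hAW x r hr).2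

/-- `D ^ 7`: the closed ball of radius `4^(-n+1) = 2⁶ · 4^(-n-2)` lies in the open ball of
radius `2⁷ · 4^(-n-2)`, which is compared with the ball of radius `4^(-n-2)` inside the cube. -/
lemma CubeSystem.exists_closedBall_density_ge (C : CubeSystem Y) (hg : DimFunc g)
    (hgD : DoublingWith g D) (hD : 0 < D) (hAW : AhlforsWith g c₁ c₂ Y) (hc₂ : 0 < c₂)
    {A : Set Y} (hA : MeasurableSet A) {c : ℝ} (hc : 0 ≤ c)
    (h : ∀ q, C.IsCube q → ENNReal.ofReal c * hMeas g q ≤ hMeas g (A ∩ q))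
    (n : ℤ) (x : Y) :
    ∃ y, x ∈ closedBall y ((4 : ℝ) ^ (-n + 1)) ∧
      ENNReal.ofReal (c * c₁ / (c₂ * D ^ 7)) *
          Measure.mkMetric' (ballGauge g) (closedBall y ((4 : ℝ) ^ (-n + 1))) ≤
        Measure.mkMetric' (ballGauge g) (A ∩ closedBall y ((4 : ℝ) ^ (-n + 1))) := by
  obtain ⟨q, hq, hxq⟩ := C.exists_mem_cube n x
  obtain ⟨y, hinner, houter⟩ := C.comparable n q hq
  set s : ℝ := (4 : ℝ) ^ (-n - 2)
  have hs : 0 < s := by positivity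
  rw [four_zpow_neg_add_one] at houter ⊢
  refine ⟨y, ball_subset_closedBall (houter hxq), ?_⟩
  have hlower : ENNReal.ofReal (c * (c₁ * g s)) ≤
      Measure.mkMetric' (ballGauge g) (A ∩ closedBall y (2 ^ 6 * s)) :=
    calc ENNReal.ofReal (c * (c₁ * g s)) = ENNReal.ofReal c * ENNReal.ofReal (c₁ * g s) :=
          ENNReal.ofReal_mul hc
      _ ≤ ENNReal.ofReal c * hMeas g q := by
          gcongr
          exact (hAW y s hs).1.trans (hMeas_mono hg.map_zero hinner)
      _ ≤ hMeas g (A ∩ q) := h q ⟨n, hq⟩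
      _ ≤ hMeas g (A ∩ closedBall y (2 ^ 6 * s)) :=
          hMeas_mono hg.map_zero (inter_subset_inter_right _ (houter.trans ball_subset_closedBall))
      _ = _ := (mkMetric'_ballGauge_apply hg.map_zero (hA.inter measurableSet_closedBall)).symm
  have hupper := measure_closedBall_two_pow_mul_le (hAW.mkMetric'_ball_le hg.map_zero) hc₂.le
    hgD hD.le y 6 hs
  have hgs := hg.pos s hs
  calc ENNReal.ofReal (c * c₁ / (c₂ * D ^ 7)) *
        Measure.mkMetric' (ballGauge g) (closedBall y (2 ^ 6 * s))
      ≤ ENNReal.ofReal (c * c₁ / (c₂ * D ^ 7)) *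
          ENNReal.ofReal (c₂ * (D ^ (6 + 1) * g s)) := by
        gcongr
    _ = ENNReal.ofReal (c * (c₁ * g s)) := by
        rw [← ENNReal.ofReal_mul' (by positivity)]
        congr 1
        field_simp
    _ ≤ _ := hlower

end Cubes

theorem stmt9_general {X : Type*} [MetricSpace X] [CompactSpace X]
    [MeasurableSpace X] [BorelSpace X]
    (g : ℝ → ℝ) (D : ℝ) (hg : DimFunc g) (hgD : DoublingWith g D)
    (hAh : Ahlfors g X) (C : CubeSystem X)
    (A : Set X) (hA : MeasurableSet A) (c : ℝ) (hc : 0 < c)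
    (h : ∀ q : Set X, C.IsCube q →
      ENNReal.ofReal c * hMeas g q < hMeas g (A ∩ q)) :
    hMeas g A = hMeas g (univ : Set X) := by
  rcases isEmpty_or_nonempty X with hX | hX
  · rw [Subsingleton.elim A univ]
  obtain ⟨c₁, c₂, hc₁, hc₂, hAW⟩ := hAh
  have hD : 0 < D := hgD.pos hg.pos
  set μ : Measure X := Measure.mkMetric' (ballGauge g)
  have hup := hAW.mkMetric'_ball_le hg.map_zero
  have : IsLocallyFiniteMeasure μ :=
    ⟨fun x => ⟨ball x 1, ball_mem_nhds x one_pos, (hup x 1 one_pos).trans_lt ofReal_lt_top⟩⟩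
  have : IsUnifLocDoublingMeasure μ := isUnifLocDoublingMeasure_of_ball_bounds
    (hAW.ofReal_le_mkMetric'_ball hg.map_zero) hup hc₁ hc₂.le hgD hD.le
  have hnull : μ Aᶜ = 0 := measure_compl_eq_zero_of_forall_closedBall_density_ge hA
    (ENNReal.ofReal_pos.2 (by positivity)).ne' tendsto_four_zpow_neg_add_one
    fun n => C.exists_closedBall_density_ge hg hgD hD hAW hc₂ hA hc.le (fun q hq => (h q hq).le) n
  rw [← mkMetric'_ballGauge_apply hg.map_zero hA,
    ← mkMetric'_ballGauge_apply hg.map_zero MeasurableSet.univ,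
    measure_congr (ae_eq_univ.2 hnull)]

/-- on a compact `g`-Ahlfors regular space, a uniform `H^g`-density lower
bound `H^g(A ∩ Q) > c·H^g(Q)` over all generalised cubes forces `H^g(A) = H^g(X)`. -/
theorem stmt9 {X : Type*} [MetricSpace X] [CompactSpace X]
    [MeasurableSpace X] [BorelSpace X]
    (g : ℝ → ℝ) (D : ℝ) (hg : DimFunc g) (hD : 1 < D) (hgD : DoublingWith g D)
    (hAh : Ahlfors g X) (C : CubeSystem X)
    (A : Set X) (hA : MeasurableSet A) (c : ℝ) (hc : 0 < c)
    (h : ∀ q : Set X, C.IsCube q →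
      ENNReal.ofReal c * hMeas g q < hMeas g (A ∩ q)) :
    hMeas g A = hMeas g (univ : Set X) :=
  stmt9_general g D hg hgD hAh C A hA c hc h
end

section
/- (Frostman-type lemma via weighted content.) Let X be a compact metric space and f a dimension function. For 0 < η ≤ ∞, define the weighted Hausdorff pre-measure λ^f_η(X) = inf ∑_i c_i f(|A_i|), the infimum over countable families {(A_i, c_i)} with c_i > 0, |A_i| ≤ η, and χ_X ≤ ∑ c_i χ_{A_i}. Then there exists a Borel measure μ on X with μ(X) = λ^f_η(X) and μ(A) ≤ f(|A|) for every set A ⊆ X with |A| < η. -/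
open Metric Set ENNReal Filter MeasureTheory

/-!
The weighted content `g ↦ λ^f_η(g)` of a function is sublinear, positively homogeneous,
monotone, vanishes on nonpositive functions and, by compactness, is finite on continuous
functions. Hahn–Banach gives a linear functional `L ≤ λ^f_η` on `C(X)` with `L 1 = λ^f_η(X)`;
it is automatically positive, and its Riesz–Markov–Kakutani measure `μ` has `μ(X) = L 1`.
If `|A| < η`, an Urysohn function `g` equal to `1` on `closure A` and vanishing off the
`ε`-thickening `U` of `A` is dominated by `χ_U`, so `μ(A) ≤ L g ≤ λ^f_η(g) ≤ f(|U|) ≤ f(|A| + 2ε)`;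
let `ε → 0` using the continuity of `f`.
-/

open scoped NNReal Topology CompactlySupported

section WeightedContent

variable {X : Type*} [MetricSpace X] {f : ℝ → ℝ} {η : ℝ≥0∞} {g h : X → ℝ}

/-- The weighted premeasure `λ^f_η` with the indicator `χ_A` replaced by a function `g`. -/
noncomputable def weightedContent (f : ℝ → ℝ) (η : ℝ≥0∞) (g : X → ℝ) : ℝ≥0∞ :=
  ⨅ (S : ℕ → Set X) (c : ℕ → ℝ≥0∞)
    (_ : ∀ i, 0 < c i ∧ c i < ⊤)
    (_ : ∀ i, ediam (S i) ≤ η)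
    (_ : ∀ x, ENNReal.ofReal (g x) ≤ ∑' i, (S i).indicator (fun _ => c i) x),
    ∑' i, c i * ENNReal.ofReal (f (diam (S i)))

lemma weightedContent_le (S : ℕ → Set X) (c : ℕ → ℝ≥0∞) (hc : ∀ i, 0 < c i ∧ c i < ⊤)
    (hS : ∀ i, ediam (S i) ≤ η)
    (hg : ∀ x, ENNReal.ofReal (g x) ≤ ∑' i, (S i).indicator (fun _ => c i) x) :
    weightedContent f η g ≤ ∑' i, c i * ENNReal.ofReal (f (diam (S i))) :=
  iInf₂_le_of_le S c <| iInf₂_le_of_le hc hS <| iInf_le _ hg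

lemma weightedContent_one : weightedContent f η (1 : X → ℝ) = wCont f η (univ : Set X) := by
  simp only [weightedContent, wCont, Pi.one_apply, ENNReal.ofReal_one, mem_univ, forall_const]
  rfl

lemma weightedContent_mono (hgh : g ≤ h) : weightedContent f η g ≤ weightedContent f η h :=
  le_iInf₂ fun S c => le_iInf₂ fun hc hS => le_iInf fun hh =>
    weightedContent_le S c hc hS fun x => (ENNReal.ofReal_le_ofReal (hgh x)).trans (hh x)

lemma weightedContent_add_le :
    weightedContent f η (g + h) ≤ weightedContent f η g + weightedContent f η h := by
  simp only [weightedContent, ENNReal.iInf_add, ENNReal.add_iInf]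
  refine le_iInf₂ fun T d => le_iInf₂ fun hd hT => le_iInf fun hh =>
    le_iInf₂ fun S c => le_iInf₂ fun hc hS => le_iInf fun hg => ?_
  -- concatenate the two weighted covers along `ℕ ⊕ ℕ ≃ ℕ`
  let e := Equiv.natSumNatEquivNat.symm
  have hsum : ∀ F : Set X → ℝ≥0∞ → ℝ≥0∞, ∑' n, F (Sum.elim S T (e n)) (Sum.elim c d (e n)) =
      ∑' i, F (S i) (c i) + ∑' i, F (T i) (d i) := fun F => by
    rw [e.tsum_eq (fun k => F (Sum.elim S T k) (Sum.elim c d k)),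
      ENNReal.summable.tsum_sum ENNReal.summable]
    rfl
  refine iInf₂_le_of_le _ _ <| iInf₂_le_of_le (fun n => ?_) (fun n => ?_) <| iInf_le_of_le
    (fun x => ?_) (hsum fun s a => a * ENNReal.ofReal (f (diam s))).le
  · cases e n <;> simp [hc, hd]
  · cases e n <;> simp [hS, hT]
  · rw [hsum fun s a => s.indicator (fun _ => a) x]
    exact ENNReal.ofReal_add_le.trans (add_le_add (hg x) (hh x))

lemma weightedContent_smul_le {a : ℝ} (ha : 0 < a) :
    weightedContent f η (a • g) ≤ ENNReal.ofReal a * weightedContent f η g := by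
  have ha' : ENNReal.ofReal a ≠ 0 := (ENNReal.ofReal_pos.2 ha).ne'
  simp only [weightedContent, ENNReal.mul_iInf_of_ne ha' ENNReal.ofReal_ne_top]
  refine le_iInf₂ fun S c => le_iInf₂ fun hc hS => le_iInf fun hg => ?_
  have hmul : ∀ x, ∑' i, (S i).indicator (fun _ => ENNReal.ofReal a * c i) x =
      ENNReal.ofReal a * ∑' i, (S i).indicator (fun _ => c i) x := fun x => by
    rw [← ENNReal.tsum_mul_left]
    exact tsum_congr fun i => by by_cases hx : x ∈ S i <;> simp [hx]
  refine (weightedContent_le S (fun i => ENNReal.ofReal a * c i) (fun i => ⟨?_, ?_⟩) hS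
    fun x => ?_).trans_eq ?_
  · exact ENNReal.mul_pos ha' (hc i).1.ne'
  · exact ENNReal.mul_lt_top ENNReal.ofReal_lt_top (hc i).2
  · rw [hmul, Pi.smul_apply, smul_eq_mul, ENNReal.ofReal_mul ha.le]
    exact mul_le_mul_right (hg x) _
  · simp only [mul_assoc, ENNReal.tsum_mul_left]

lemma weightedContent_smul {a : ℝ} (ha : 0 < a) :
    weightedContent f η (a • g) = ENNReal.ofReal a * weightedContent f η g := by
  refine (weightedContent_smul_le ha).antisymm ?_
  calc ENNReal.ofReal a * weightedContent f η g
      = ENNReal.ofReal a * weightedContent f η (a⁻¹ • a • g) := by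
        rw [smul_smul, inv_mul_cancel₀ ha.ne', one_smul]
    _ ≤ ENNReal.ofReal a * (ENNReal.ofReal a⁻¹ * weightedContent f η (a • g)) :=
        mul_le_mul_right (weightedContent_smul_le (inv_pos.2 ha)) _
    _ = weightedContent f η (a • g) := by
        rw [← mul_assoc, ← ENNReal.ofReal_mul ha.le, mul_inv_cancel₀ ha.ne', ENNReal.ofReal_one,
          one_mul]

lemma weightedContent_le_sum_of_le_indicator (hf0 : f 0 = 0) {s : Finset ℕ} {B : ℕ → Set X}
    (hB : ∀ i ∈ s, ediam (B i) ≤ η) (hg : g ≤ (⋃ i ∈ s, B i).indicator 1) :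
    weightedContent f η g ≤ ∑ i ∈ s, ENNReal.ofReal (f (diam (B i))) := by
  classical
  let S : ℕ → Set X := fun i => if i ∈ s then B i else ∅
  refine (weightedContent_le S (fun _ => 1) (fun _ => ⟨one_pos, ENNReal.one_lt_top⟩)
    (fun i => ?_) (fun x => ?_)).trans_eq ?_
  · by_cases hi : i ∈ s <;> simp [S, hi, hB]
  · by_cases hx : x ∈ ⋃ i ∈ s, B i
    · obtain ⟨i, hi, hxi⟩ := mem_iUnion₂.1 hx
      refine le_trans ?_ (ENNReal.le_tsum i)
      simpa [S, hi, hxi] using hg x |>.trans (indicator_le_self' (by simp) x)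
    · rw [ENNReal.ofReal_eq_zero.2 (by simpa [hx] using hg x)]
      exact zero_le
  · rw [tsum_eq_sum (s := s) fun i hi => by simp [S, hi, hf0]]
    exact Finset.sum_congr rfl fun i hi => by simp [S, hi]

lemma weightedContent_le_of_le_indicator (hf0 : f 0 = 0) {U : Set X} (hU : ediam U ≤ η)
    (hg : g ≤ U.indicator 1) : weightedContent f η g ≤ ENNReal.ofReal (f (diam U)) := by
  simpa using weightedContent_le_sum_of_le_indicator (s := {0}) (B := fun _ => U) hf0
    (by simpa using hU) (by simpa using hg)

lemma weightedContent_eq_zero_of_nonpos (hf0 : f 0 = 0) (hg : g ≤ 0) :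
    weightedContent f η g = 0 := by
  simpa using weightedContent_le_sum_of_le_indicator (s := ∅) (B := fun _ => ∅) (η := η) hf0
    (by simp) fun x => by simpa using hg x

lemma exists_finset_cover_ediam_le [CompactSpace X] (hη : 0 < η) :
    ∃ (s : Finset ℕ) (B : ℕ → Set X), (∀ i, ediam (B i) ≤ η) ∧ univ ⊆ ⋃ i ∈ s, B i := by
  rcases isEmpty_or_nonempty X with hX | hX
  · exact ⟨∅, fun _ => ∅, by simp, fun x => isEmptyElim x⟩
  obtain ⟨u, hu⟩ := TopologicalSpace.exists_dense_seq X
  have hr : 0 < η / 2 := ENNReal.half_pos hη.ne'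
  obtain ⟨s, hs⟩ := isCompact_univ.elim_finite_subcover (fun i => eball (u i) (η / 2))
    (fun _ => isOpen_eball) fun x _ => by
      obtain ⟨i, hi⟩ := hu.exists_mem_open isOpen_eball ⟨x, mem_eball_self hr⟩
      exact mem_iUnion.2 ⟨i, mem_eball_comm.1 hi⟩
  exact ⟨s, fun i => eball (u i) (η / 2),
    fun i => ediam_eball_le.trans_eq (ENNReal.mul_div_cancel two_ne_zero ENNReal.ofNat_ne_top), hs⟩

lemma weightedContent_one_lt_top [CompactSpace X] (hf0 : f 0 = 0) (hη : 0 < η) :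
    weightedContent f η (1 : X → ℝ) < ⊤ := by
  obtain ⟨s, B, hB, hcov⟩ := exists_finset_cover_ediam_le (X := X) hη
  refine (weightedContent_le_sum_of_le_indicator (s := s) hf0 (fun i _ => hB i)
    fun x => ?_).trans_lt
    (ENNReal.sum_lt_top.2 fun _ _ => ENNReal.ofReal_lt_top)
  simp [indicator_of_mem (hcov (mem_univ x))]

lemma weightedContent_lt_top [CompactSpace X] (hf0 : f 0 = 0) (hη : 0 < η)
    (hg : BddAbove (range g)) : weightedContent f η g < ⊤ := by
  obtain ⟨M, hM⟩ := hg
  have hM' : g ≤ max M 1 • (1 : X → ℝ) := fun x => by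
    simpa using (hM (mem_range_self x)).trans (le_max_left M 1)
  calc weightedContent f η g ≤ weightedContent f η (max M 1 • (1 : X → ℝ)) :=
        weightedContent_mono hM'
    _ = ENNReal.ofReal (max M 1) * weightedContent f η 1 :=
        weightedContent_smul (zero_lt_one.trans_le (le_max_right M 1))
    _ < ⊤ := ENNReal.mul_lt_top ENNReal.ofReal_lt_top (weightedContent_one_lt_top hf0 hη)

end WeightedContent

theorem exists_linearMap_eq_le_sublinear {E : Type*} [AddCommGroup E] [Module ℝ E] (N : E → ℝ)
    (N_hom : ∀ c : ℝ, 0 < c → ∀ x, N (c • x) = c * N x) (N_add : ∀ x y, N (x + y) ≤ N x + N y)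
    (x₀ : E) : ∃ L : E →ₗ[ℝ] ℝ, L x₀ = N x₀ ∧ ∀ x, L x ≤ N x := by
  have N_zero : N 0 = 0 := by
    have h := N_hom 2 two_pos 0
    rw [smul_zero] at h
    linarith
  have N_line : ∀ t : ℝ, t * N x₀ ≤ N (t • x₀) := fun t => by
    rcases lt_trichotomy t 0 with ht | rfl | ht
    · have h := N_add x₀ (-x₀)
      rw [add_neg_cancel, N_zero] at h
      rw [← neg_neg t, neg_smul, ← smul_neg, N_hom (-t) (neg_pos.2 ht)]
      nlinarith
    · simp [N_zero]
    · rw [N_hom t ht]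
  have H0 : ∀ c : ℝ, c • x₀ = 0 → c • N x₀ = 0 := fun c hc => by
    rcases smul_eq_zero.1 hc with rfl | rfl <;> simp [N_zero]
  obtain ⟨L, hLx₀, hLN⟩ := exists_extension_of_le_sublinear
    (LinearPMap.mkSpanSingleton' x₀ (N x₀) H0) N N_hom N_add fun ⟨_, hx⟩ => by
      obtain ⟨t, rfl⟩ := Submodule.mem_span_singleton.1 hx
      simpa only [LinearPMap.mkSpanSingleton'_apply, RingHom.id_apply, smul_eq_mul] using N_line t
  exact ⟨L, (hLx₀ ⟨x₀, Submodule.mem_span_singleton_self x₀⟩).trans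
    (LinearPMap.mkSpanSingleton'_apply_self _ _ _ _), hLN⟩

open CompactlySupportedContinuousMap in
lemma exists_positiveLinearMap_le_weightedContent {X : Type*} [MetricSpace X] [CompactSpace X]
    {f : ℝ → ℝ} {η : ℝ≥0∞} (hf0 : f 0 = 0) (hη : 0 < η) :
    ∃ Λ : C_c(X, ℝ) →ₚ[ℝ] ℝ,
      ENNReal.ofReal (Λ (continuousMapEquiv (1 : C(X, ℝ)))) = wCont f η (univ : Set X) ∧
      ∀ g : C_c(X, ℝ), ENNReal.ofReal (Λ g) ≤ weightedContent f η ⇑g := by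
  have hfin : ∀ g : C_c(X, ℝ), weightedContent f η ⇑g ≠ ⊤ := fun g =>
    (weightedContent_lt_top hf0 hη (isCompact_range g.continuous).bddAbove).ne
  obtain ⟨L, hL1, hL⟩ := exists_linearMap_eq_le_sublinear
    (fun g : C_c(X, ℝ) => (weightedContent f η ⇑g).toReal)
    (fun c hc g => by
      rw [CompactlySupportedContinuousMap.coe_smul, weightedContent_smul hc, ENNReal.toReal_mul,
        ENNReal.toReal_ofReal hc.le])
    (fun g h => by
      rw [CompactlySupportedContinuousMap.coe_add, ← ENNReal.toReal_add (hfin g) (hfin h)]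
      exact ENNReal.toReal_mono (ENNReal.add_ne_top.2 ⟨hfin g, hfin h⟩) weightedContent_add_le)
    (continuousMapEquiv 1)
  have hpos : ∀ g : C_c(X, ℝ), 0 ≤ g → 0 ≤ L g := fun g hg => by
    have h := hL (-g)
    rw [CompactlySupportedContinuousMap.coe_neg,
      weightedContent_eq_zero_of_nonpos hf0 (neg_nonpos.2 hg), map_neg] at h
    simpa using h
  refine ⟨PositiveLinearMap.mk₀ L hpos, ?_, fun g => ?_⟩
  · change ENNReal.ofReal (L (continuousMapEquiv 1)) = _
    rw [hL1, ← weightedContent_one]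
    exact ENNReal.ofReal_toReal (hfin _)
  · exact (ENNReal.ofReal_le_ofReal (hL g)).trans ENNReal.ofReal_toReal_le

namespace RealRMK

variable {X : Type*} [TopologicalSpace X] [T2Space X] [LocallyCompactSpace X]
  [MeasurableSpace X] [BorelSpace X] (Λ : C_c(X, ℝ) →ₚ[ℝ] ℝ)

lemma rieszMeasure_univ [CompactSpace X] :
    rieszMeasure Λ univ =
      ENNReal.ofReal (Λ (CompactlySupportedContinuousMap.continuousMapEquiv 1)) :=
  le_antisymm
    (rieszMeasure_le_of_eq_one Λ (fun _ => zero_le_one) isCompact_univ fun _ _ => rfl)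
    (le_rieszMeasure_tsupport_subset Λ (fun _ => ⟨zero_le_one, le_rfl⟩) (subset_univ _))

lemma exists_le_indicator_rieszMeasure_le {K U : Set X} (hK : IsCompact K) (hU : IsOpen U)
    (hKU : K ⊆ U) :
    ∃ g : C_c(X, ℝ), ⇑g ≤ U.indicator 1 ∧ rieszMeasure Λ K ≤ ENNReal.ofReal (Λ g) := by
  obtain ⟨g, hgK, hgU, hg, hg01⟩ := exists_continuous_one_zero_of_isCompact hK
    hU.isClosed_compl (disjoint_compl_right.mono_left hKU)
  refine ⟨⟨g, hg⟩, fun x => ?_, rieszMeasure_le_of_eq_one Λ (fun x => (hg01 x).1) hK hgK⟩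
  by_cases hx : x ∈ U
  · simpa [hx] using (hg01 x).2
  · simp [hx, hgU hx]

end RealRMK

lemma eventually_ediam_thickening_le {X : Type*} [PseudoMetricSpace X] {A : Set X} {η : ℝ≥0∞}
    (hA : ediam A < η) : ∀ᶠ ε : ℝ≥0 in 𝓝[>] 0, ediam (thickening ε A) ≤ η := by
  obtain ⟨r, hr, hrη⟩ := ENNReal.lt_iff_exists_add_pos_lt.1 hA
  filter_upwards [Ioo_mem_nhdsGT (half_pos hr)] with ε hε
  calc ediam (thickening ε A) ≤ ediam A + 2 * ε := ediam_thickening_le ε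
    _ ≤ ediam A + r := by
        gcongr
        exact_mod_cast (lt_div_iff₀' two_pos).1 hε.2 |>.le
    _ ≤ η := hrη.le

/-- Frostman-type lemma via weighted content: there is a Borel measure
`μ` with `μ(X) = λ^f_η(X)` and `μ(A) ≤ f(|A|)` whenever `|A| < η`. -/
theorem stmt10 {X : Type*} [MetricSpace X] [CompactSpace X]
    [MeasurableSpace X] [BorelSpace X]
    (f : ℝ → ℝ) (hf : DimFunc f) (η : ℝ≥0∞) (hη : 0 < η) :
    ∃ μ : Measure X, μ univ = wCont f η (univ : Set X) ∧
      ∀ A : Set X, EMetric.diam A < η → μ A ≤ ENNReal.ofReal (f (diam A)) := by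
  obtain ⟨Λ, hΛ1, hΛ⟩ := exists_positiveLinearMap_le_weightedContent (X := X) hf.map_zero hη
  refine ⟨RealRMK.rieszMeasure Λ, (RealRMK.rieszMeasure_univ Λ).trans hΛ1, fun A hA => ?_⟩
  have h_thickening : ∀ ε : ℝ≥0, 0 < ε → ediam (thickening ε A) ≤ η →
      RealRMK.rieszMeasure Λ A ≤ ENNReal.ofReal (f (diam A + 2 * ε)) := fun ε hε hεη => by
    obtain ⟨g, hgU, hKg⟩ := RealRMK.exists_le_indicator_rieszMeasure_le Λ
      isClosed_closure.isCompact isOpen_thickening (closure_subset_thickening hε A)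
    calc RealRMK.rieszMeasure Λ A ≤ RealRMK.rieszMeasure Λ (closure A) :=
          measure_mono subset_closure
      _ ≤ ENNReal.ofReal (Λ g) := hKg
      _ ≤ weightedContent f η g := hΛ g
      _ ≤ ENNReal.ofReal (f (diam (thickening ε A))) :=
          weightedContent_le_of_le_indicator hf.map_zero hεη hgU
      _ ≤ ENNReal.ofReal (f (diam A + 2 * ε)) :=
          ENNReal.ofReal_le_ofReal (hf.mono (diam_thickening_le A ε.2))
  have h_lim : Tendsto (fun ε : ℝ≥0 => ENNReal.ofReal (f (diam A + 2 * ε))) (𝓝[>] 0)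
      (𝓝 (ENNReal.ofReal (f (diam A)))) := by
    have hc : Continuous fun ε : ℝ≥0 => ENNReal.ofReal (f (diam A + 2 * ε)) :=
      ENNReal.continuous_ofReal.comp (hf.continuous.comp (by fun_prop))
    simpa using (hc.tendsto 0).mono_left nhdsWithin_le_nhds
  exact ge_of_tendsto h_lim <| (eventually_mem_nhdsWithin.and
    (eventually_ediam_thickening_le hA)).mono fun ε hε => h_thickening ε hε.1 hε.2
end

section
/- Let X, g, and the balls {B_n} be as in the MTP from balls to open sets. Suppose {R_α : α ∈ J} are resonant sets in X with the κ-scaling property for some 0 ≤ κ < 1: H^g(B(x,r) ∩ Δ(R_α,η)) ≍ g(η)^{1-κ}·g(r)^κ for x ∈ R_α, 0 < η ≤ r. Let f ⪯ g be a dimension function with f/g^κ also a dimension function, let Υ_n → 0, and set Ῡ_n := g^{-1}((f(Υ_n)/g(Υ_n)^κ)^{1/(1-κ)}). Then for any ball B with center z on a resonant set R_n and radius Ῡ_n, the set E_B = 5B ∩ Δ(R_n, Υ_n) satisfies H^f_∞(E_B) ≳ H^g(B), with an implied constant independent of n and B. -/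
/-!
Write `Ῡ` for `Ub n` and `E' = B(z, Ῡ) ∩ Δ(R_n, Υ)`. The defining relation of `Ῡ` turns the
`κ`-scaling estimate at scales `Υ ≤ Ῡ` into `H^g(E') ≍ g(Υ) g(Ῡ) / f(Υ)`. By the mass
distribution principle for `H^g` restricted to `E'` it then suffices that every ball `U` of
diameter `d` has `H^g(E' ∩ U) ≲ (g(Υ) / f(Υ)) f(d)`. For `d < Υ` this follows from Ahlfors
regularity, doubling and `f ⪯ g`; for `Υ ≤ d < Ῡ` from the upper `κ`-scaling bound on a ball of
radius `2d` centred on `R_n`, doubling, and monotonicity of `f / g^κ`; for `d ≥ Ῡ` from the total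
mass of `E'` together with `g ≲ f` on `(0, diam X]`. The result is `H^f_∞(E_B) ≳ g(Ῡ) ≍ H^g(B)`.

The scaling property only holds below `diam X`, so this needs `2Ῡ < diam X`, which fails for
finitely many `n` only since `Ῡ → 0`. For those `n`, and whenever `Ῡ ≤ Υ`, `E_B` contains the ball
`B(z, min(Ῡ, Υ))`, whose `f`-content is `≳ g(min(Ῡ, Υ))` by the mass distribution principle and
Ahlfors regularity alone.
-/

open Metric Set ENNReal Filter MeasureTheory

section

variable {X : Type*} [MetricSpace X] {g f : ℝ → ℝ} {c₁ c₂ D κ k₁ k₂ : ℝ}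

noncomputable def ballCost (g : ℝ → ℝ) (η : ℝ) (s : Set X) : ℝ≥0∞ :=
  ⨅ (_ : (∃ x r, s = ball x r) ∧ diam s ≤ η), ENNReal.ofReal (g (diam s))

lemma ballCost_empty [Nonempty X] (hg0 : g 0 = 0) {η : ℝ} (hη : 0 ≤ η) :
    ballCost g η (∅ : Set X) = 0 := by
  obtain ⟨x⟩ := ‹Nonempty X›
  rw [ballCost, iInf_pos ⟨⟨x, 0, (ball_zero (x := x)).symm⟩, by simpa using hη⟩]
  simp [hg0]

lemma hMeasAux_eq_ofFunction [Nonempty X] (hg0 : g 0 = 0) {η : ℝ} (hη : 0 ≤ η) (A : Set X) :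
    hMeasAux g η A = OuterMeasure.ofFunction (ballCost g η) (ballCost_empty hg0 hη) A := by
  rw [OuterMeasure.ofFunction_eq_iInf_mem (ballCost g η) _ (fun s hs => iInf_neg hs), hMeasAux]
  apply le_antisymm
  · refine le_iInf₂ fun U hU => le_iInf fun hA => ?_
    refine iInf₂_le_of_le U (fun i => (hU i).1) (iInf₂_le_of_le hA (fun i => (hU i).2) ?_)
    exact (tsum_congr fun i => by rw [ballCost, iInf_pos (hU i)]).ge
  · refine le_iInf₂ fun U hU => le_iInf₂ fun hA hd => ?_
    refine iInf₂_le_of_le U (fun i => ⟨hU i, hd i⟩) (iInf_le_of_le hA ?_)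
    exact (tsum_congr fun i => by rw [ballCost, iInf_pos ⟨hU i, hd i⟩]).le

lemma hMeas_eq_iSup_ofFunction [Nonempty X] (hg0 : g 0 = 0) (A : Set X) :
    hMeas g A = (⨆ η : Ioi (0 : ℝ),
      OuterMeasure.ofFunction (ballCost g η) (ballCost_empty hg0 (le_of_lt η.2))) A := by
  rw [OuterMeasure.iSup_apply, hMeas, iSup_subtype']
  exact iSup_congr fun η => hMeasAux_eq_ofFunction hg0 (le_of_lt η.2) A

lemma hMeas_mono_s18 [Nonempty X] (hg0 : g 0 = 0) {A B : Set X} (h : A ⊆ B) :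
    hMeas g A ≤ hMeas g B := by
  simp only [hMeas_eq_iSup_ofFunction hg0]
  exact measure_mono h

lemma hMeas_le_tsum_inter [Nonempty X] (hg0 : g 0 = 0) {A : Set X} {U : ℕ → Set X}
    (hA : A ⊆ ⋃ i, U i) : hMeas g A ≤ ∑' i, hMeas g (A ∩ U i) := by
  have hA' : A ⊆ ⋃ i, A ∩ U i := by simpa only [← inter_iUnion] using subset_inter le_rfl hA
  simp only [hMeas_eq_iSup_ofFunction hg0]
  exact (measure_mono hA').trans (measure_iUnion_le _)

lemma hCont_mono {A B : Set X} (h : A ⊆ B) : hCont f A ≤ hCont f B :=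
  iInf₂_mono fun _ _ => iInf_const_mono h.trans

/-- The mass distribution principle for `H^g` restricted to `E'`. -/
lemma hMeas_le_mul_hCont [Nonempty X] (hg0 : g 0 = 0) {E' E : Set X} (hE : E' ⊆ E) {K : ℝ}
    (hK : 0 < K)
    (hball : ∀ x r, hMeas g (E' ∩ ball x r) ≤ ENNReal.ofReal (K * f (diam (ball x r)))) :
    hMeas g E' ≤ ENNReal.ofReal K * hCont f E := by
  have hK0 : ENNReal.ofReal K ≠ 0 := by simpa using hK
  rw [mul_comm, ← ENNReal.div_le_iff_le_mul (Or.inl hK0) (Or.inl ofReal_ne_top)]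
  refine le_iInf₂ fun U hU => le_iInf fun hcov => ?_
  rw [ENNReal.div_le_iff_le_mul (Or.inl hK0) (Or.inl ofReal_ne_top)]
  calc hMeas g E' ≤ ∑' i, hMeas g (E' ∩ U i) := hMeas_le_tsum_inter hg0 (hE.trans hcov)
    _ ≤ ∑' i, ENNReal.ofReal K * ENNReal.ofReal (f (diam (U i))) := by
      refine ENNReal.tsum_le_tsum fun i => ?_
      obtain ⟨x, r, hUi⟩ := hU i
      rw [hUi, ← ENNReal.ofReal_mul hK.le]
      exact hball x r
    _ = _ := by rw [ENNReal.tsum_mul_left, mul_comm]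

lemma hMeas_eq_zero_of_subsingleton [Nonempty X] (hg : DimFunc g)
    (hAh : AhlforsWith g c₁ c₂ X) {S : Set X} (hS : S.Subsingleton) : hMeas g S = 0 := by
  obtain ⟨y, hy⟩ : ∃ y, S ⊆ {y} := by
    rcases S.eq_empty_or_nonempty with rfl | ⟨y, hy⟩
    · exact ⟨Classical.arbitrary X, empty_subset _⟩
    · exact ⟨y, fun s hs => hS hs hy⟩
  have hlim : Tendsto (fun ε => ENNReal.ofReal (c₂ * g ε)) (nhdsWithin 0 (Ioi 0)) (nhds 0) := by
    have := ((hg.continuous.tendsto 0).const_mul c₂).mono_left (nhdsWithin_le_nhds (s := Ioi 0))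
    simpa [hg.map_zero] using ENNReal.tendsto_ofReal this
  refine nonpos_iff_eq_zero.1 (ge_of_tendsto hlim (eventually_nhdsWithin_of_forall ?_))
  intro ε (hε : 0 < ε)
  refine (hMeas_mono_s18 hg.map_zero (hy.trans ?_)).trans (hAh y ε hε).2
  simpa using mem_ball_self (x := y) hε

lemma diam_univ_pos [CompactSpace X] [Nonempty X] (hg : DimFunc g)
    (hAh : AhlforsWith g c₁ c₂ X) (hc₁ : 0 < c₁) : 0 < diam (univ : Set X) := by
  refine diam_pos ?_ isCompact_univ.isBounded
  by_contra h
  obtain ⟨x⟩ := ‹Nonempty X›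
  have hzero := hMeas_eq_zero_of_subsingleton hg hAh
    ((not_nontrivial_iff.1 h).anti (subset_univ (ball x 1)))
  have hlow := (hAh x 1 one_pos).1
  rw [hzero, nonpos_iff_eq_zero, ENNReal.ofReal_eq_zero] at hlow
  nlinarith [hg.pos 1 one_pos]

lemma hMeas_le_of_diam_pos [Nonempty X] (hg : DimFunc g) (hgD : DoublingWith g D)
    (hAh : AhlforsWith g c₁ c₂ X) (hc₂ : 0 ≤ c₂) {U : Set X} (hU : Bornology.IsBounded U)
    (hd : 0 < diam U) : hMeas g U ≤ ENNReal.ofReal (c₂ * D * g (diam U)) := by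
  obtain ⟨y, hy⟩ : U.Nonempty := nonempty_iff_ne_empty.2 (by rintro rfl; simp at hd)
  have hUy : U ⊆ ball y (2 * diam U) := fun u hu =>
    mem_ball.2 ((dist_le_diam_of_mem hU hu hy).trans_lt (by linarith))
  refine (hMeas_mono_s18 hg.map_zero hUy).trans ((hAh y _ (by positivity)).2.trans ?_)
  rw [mul_assoc]
  exact ENNReal.ofReal_le_ofReal (mul_le_mul_of_nonneg_left (hgD _ hd).le hc₂)

lemma hMeas_inter_ball_le_of_nondegenerate [Nonempty X] (hg : DimFunc g)
    (hAh : AhlforsWith g c₁ c₂ X) {S : Set X} {K : ℝ}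
    (h : ∀ x r, 0 < diam (ball x r) → (S ∩ ball x r).Nonempty →
      hMeas g (S ∩ ball x r) ≤ ENNReal.ofReal (K * f (diam (ball x r)))) (x : X) (r : ℝ) :
    hMeas g (S ∩ ball x r) ≤ ENNReal.ofReal (K * f (diam (ball x r))) := by
  by_cases hsub : (S ∩ ball x r).Subsingleton
  · rw [hMeas_eq_zero_of_subsingleton hg hAh hsub]
    exact zero_le
  rw [not_subsingleton_iff] at hsub
  exact h x r (diam_pos (hsub.mono inter_subset_right) isBounded_ball) hsub.nonempty

lemma DimLE.exists_pos_mul_div_le_div (hf : DimFunc f) (hg : DimFunc g) (hfg : DimLE f g)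
    {T : ℝ} (hT : 0 < T) :
    ∃ c, 0 < c ∧ ∀ d u, 0 < d → d ≤ u → u ≤ T → c * (f u / g u) ≤ f d / g d := by
  obtain ⟨hmono | hanti, L, hL, hlim⟩ := hfg
  · have hLle : ∀ d, 0 < d → L ≤ ENNReal.ofReal (f d / g d) := fun d hd =>
      le_of_tendsto hlim (by
        filter_upwards [Ioo_mem_nhdsGT hd] with r hr
        exact ENNReal.ofReal_le_ofReal (hmono hr.1 hd hr.2.le))
    have hLtop : L ≠ ⊤ := ne_top_of_le_ne_top ofReal_ne_top (hLle T hT)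
    have hratioT : 0 < f T / g T := div_pos (hf.pos T hT) (hg.pos T hT)
    refine ⟨L.toReal / (f T / g T), div_pos (ENNReal.toReal_pos hL.ne' hLtop) hratioT,
      fun d u hd hdu huT => ?_⟩
    calc L.toReal / (f T / g T) * (f u / g u) ≤ L.toReal / (f T / g T) * (f T / g T) := by
          refine mul_le_mul_of_nonneg_left ?_ (by positivity)
          exact hmono (mem_Ioi.2 (hd.trans_le hdu)) (mem_Ioi.2 hT) huT
      _ = L.toReal := div_mul_cancel₀ _ hratioT.ne'
      _ ≤ f d / g d :=
          ENNReal.toReal_le_of_le_ofReal (div_nonneg (hf.pos d hd).le (hg.pos d hd).le) (hLle d hd)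
  · refine ⟨1, one_pos, fun d u hd hdu _ => ?_⟩
    rw [one_mul]
    exact hanti hd (mem_Ioi.2 (hd.trans_le hdu)) hdu

lemma DimLE.exists_pos_mul_le (hf : DimFunc f) (hg : DimFunc g) (hfg : DimLE f g)
    {T : ℝ} (hT : 0 < T) : ∃ c, 0 < c ∧ ∀ d, 0 < d → d ≤ T → c * g d ≤ f d := by
  obtain ⟨c, hc, hratio⟩ := hfg.exists_pos_mul_div_le_div hf hg hT
  have hfT := hf.pos T hT
  have hgT := hg.pos T hT
  refine ⟨c * (f T / g T), by positivity, fun d hd hdT => ?_⟩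
  exact (le_div_iff₀ (hg.pos d hd)).1 (hratio d T hd hdT le_rfl)

lemma DoublingWith.rpow_le (hgD : DoublingWith g D) (hg : DimFunc g) (hD : 1 ≤ D)
    (hκ0 : 0 ≤ κ) (hκ1 : κ ≤ 1) {d : ℝ} (hd : 0 < d) : g (2 * d) ^ κ ≤ D * g d ^ κ :=
  calc g (2 * d) ^ κ ≤ (D * g d) ^ κ :=
        Real.rpow_le_rpow (hg.pos _ (by positivity)).le (hgD d hd).le hκ0
    _ = D ^ κ * g d ^ κ := Real.mul_rpow (by linarith) (hg.pos d hd).le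
    _ ≤ D * g d ^ κ := mul_le_mul_of_nonneg_right
        (by simpa using Real.rpow_le_rpow_of_exponent_le hD hκ1)
        (Real.rpow_nonneg (hg.pos d hd).le κ)

lemma DimFunc.tendsto_rpow_comp {φ : ℝ → ℝ} (hφ : DimFunc φ) {u : ℕ → ℝ}
    (hu : Tendsto u atTop (nhds 0)) {p : ℝ} (hp : 0 < p) :
    Tendsto (fun n => φ (u n) ^ p) atTop (nhds 0) := by
  have h := (hφ.continuous.tendsto 0).comp hu
  rw [hφ.map_zero] at h
  simpa [Function.comp_def, Real.zero_rpow hp.ne'] using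
    (Real.continuousAt_rpow_const 0 p (Or.inr hp.le)).tendsto.comp h

lemma DimFunc.eventually_lt_of_tendsto (hg : DimFunc g) {u : ℕ → ℝ}
    (hu : Tendsto (fun n => g (u n)) atTop (nhds 0)) {T : ℝ} (hT : 0 < T) :
    ∀ᶠ n in atTop, u n < T :=
  (hu.eventually (gt_mem_nhds (hg.pos T hT))).mono fun _ hn => hg.mono.reflect_lt hn

lemma rpow_mul_rpow_eq_of_eq_rpow {a b F : ℝ} (ha : 0 < a) (hF : 0 < F) (hκ1 : κ < 1)
    (h : b = (F / a ^ κ) ^ (1 / (1 - κ))) : a ^ (1 - κ) * b ^ κ = a * b / F := by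
  have hb : 0 < b := h ▸ by positivity
  have hb1 : b ^ (1 - κ) = F / a ^ κ := by
    rw [h, ← Real.rpow_mul (by positivity), one_div_mul_cancel (by linarith), Real.rpow_one]
  rw [eq_div_iff hF.ne']
  calc a ^ (1 - κ) * b ^ κ * F = (a ^ (1 - κ) * a ^ κ) * (b ^ κ * b ^ (1 - κ)) := by
        rw [hb1]; field_simp
    _ = a * b := by rw [← Real.rpow_add ha, ← Real.rpow_add hb]; norm_num

lemma ofReal_mul_hMeas_ball_le (hAh : AhlforsWith g c₁ c₂ X) {C r : ℝ} (hC : 0 ≤ C)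
    (hr : 0 < r) (z : X) :
    ENNReal.ofReal C * hMeas g (ball z r) ≤ ENNReal.ofReal (C * c₂ * g r) := by
  rw [mul_assoc, ENNReal.ofReal_mul hC]
  exact mul_le_mul_right (hAh z r hr).2 _

lemma exists_pos_mul_le_hCont_ball [CompactSpace X] [Nonempty X] (hf : DimFunc f)
    (hg : DimFunc g) (hfg : DimLE f g) (hD : 0 < D) (hgD : DoublingWith g D)
    (hAh : AhlforsWith g c₁ c₂ X) (hc₁ : 0 < c₁) (hc₂ : 0 < c₂) :
    ∃ c, 0 < c ∧ ∀ (z : X) (ρ : ℝ), 0 < ρ → ENNReal.ofReal (c * g ρ) ≤ hCont f (ball z ρ) := by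
  have hT := diam_univ_pos hg hAh hc₁
  obtain ⟨c₀, hc₀, hfg₀⟩ := hfg.exists_pos_mul_le hf hg hT
  have hK : 0 < c₂ * D / c₀ := by positivity
  refine ⟨c₁ / (c₂ * D / c₀), by positivity, fun z ρ hρ => ?_⟩
  have hball : ∀ x r, 0 < diam (ball x r) → (ball z ρ ∩ ball x r).Nonempty →
      hMeas g (ball z ρ ∩ ball x r) ≤ ENNReal.ofReal (c₂ * D / c₀ * f (diam (ball x r))) := by
    intro x r hd _
    refine (hMeas_mono_s18 hg.map_zero inter_subset_right).trans
      ((hMeas_le_of_diam_pos hg hgD hAh hc₂.le isBounded_ball hd).trans (ofReal_le_ofReal ?_))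
    have := hfg₀ _ hd (diam_mono (subset_univ _) isCompact_univ.isBounded)
    rw [div_mul_eq_mul_div, le_div_iff₀ hc₀]
    calc c₂ * D * g (diam (ball x r)) * c₀ = c₂ * D * (c₀ * g (diam (ball x r))) := by ring
      _ ≤ c₂ * D * f (diam (ball x r)) := by gcongr
  have hmass := hMeas_le_mul_hCont hg.map_zero subset_rfl hK
    (hMeas_inter_ball_le_of_nondegenerate hg hAh hball)
  calc ENNReal.ofReal (c₁ / (c₂ * D / c₀) * g ρ)
      = ENNReal.ofReal (c₁ * g ρ) / ENNReal.ofReal (c₂ * D / c₀) := by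
        rw [← ENNReal.ofReal_div_of_pos hK]; ring_nf
    _ ≤ hCont f (ball z ρ) :=
        ENNReal.div_le_of_le_mul ((hAh z ρ hρ).1.trans (hmass.trans_eq (mul_comm _ _)))

lemma ball_subset_ball_inter_thickening {S : Set X} {z : X} (hz : z ∈ S) {ρ r η : ℝ}
    (hr : ρ ≤ r) (hη : ρ ≤ η) : ball z ρ ⊆ ball z r ∩ thickening η S := fun _ hu =>
  ⟨ball_subset_ball hr hu, mem_thickening_iff.2 ⟨z, hz, (mem_ball.1 hu).trans_le hη⟩⟩

lemma ofReal_mul_hMeas_ball_le_hCont_inter (hg : DimFunc g) (hAh : AhlforsWith g c₁ c₂ X)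
    (hc₂ : 0 < c₂) {c : ℝ} (hc : 0 < c)
    (hcball : ∀ (z : X) (ρ : ℝ), 0 < ρ → ENNReal.ofReal (c * g ρ) ≤ hCont f (ball z ρ))
    {S : Set X} {z : X} (hz : z ∈ S) {r η : ℝ} (hr : 0 < r) (hη : 0 < η) :
    ENNReal.ofReal (c * g (min r η) / (c₂ * g r)) * hMeas g (ball z r) ≤
      hCont f (ball z r ∩ thickening η S) := by
  have hρ : 0 < min r η := lt_min hr hη
  have := hg.pos r hr
  have := hg.pos _ hρ
  calc _ ≤ ENNReal.ofReal (c * g (min r η) / (c₂ * g r) * c₂ * g r) :=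
        ofReal_mul_hMeas_ball_le hAh (by positivity) hr z
    _ = ENNReal.ofReal (c * g (min r η)) := by congr 1; field_simp
    _ ≤ hCont f (ball z (min r η)) := hcball z _ hρ
    _ ≤ _ := hCont_mono
        (ball_subset_ball_inter_thickening hz (min_le_left _ _) (min_le_right _ _))

def KappaScaling (g : ℝ → ℝ) (κ k₁ k₂ : ℝ) (S : Set X) : Prop :=
  ∀ (x : X) (η rad : ℝ), x ∈ S → 0 < η → η ≤ rad → rad < diam (univ : Set X) →
    ENNReal.ofReal (k₁ * (g η ^ (1 - κ) * g rad ^ κ)) ≤ hMeas g (ball x rad ∩ thickening η S) ∧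
      hMeas g (ball x rad ∩ thickening η S) ≤ ENNReal.ofReal (k₂ * (g η ^ (1 - κ) * g rad ^ κ))

lemma hMeas_inter_le_of_ratio_le [Nonempty X] (hg : DimFunc g) (hgD : DoublingWith g D)
    (hAh : AhlforsWith g c₁ c₂ X) (hc₂ : 0 ≤ c₂) (hD : 0 ≤ D) {c₃ Υ : ℝ} (hc₃ : 0 < c₃)
    (hΥ : 0 < Υ) (hf : DimFunc f) (S : Set X) {U : Set X} (hU : Bornology.IsBounded U)
    (hd : 0 < diam U) (hratio : c₃ * (f Υ / g Υ) ≤ f (diam U) / g (diam U)) :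
    hMeas g (S ∩ U) ≤ ENNReal.ofReal (c₂ * D / c₃ * (g Υ / f Υ * f (diam U))) := by
  refine (hMeas_mono_s18 hg.map_zero inter_subset_right).trans
    ((hMeas_le_of_diam_pos hg hgD hAh hc₂ hU hd).trans (ENNReal.ofReal_le_ofReal ?_))
  have := hf.pos Υ hΥ
  have := hg.pos Υ hΥ
  have hgd : g (diam U) ≤ 1 / c₃ * (g Υ / f Υ) * f (diam U) :=
    calc g (diam U) = c₃ * (f Υ / g Υ) * g (diam U) * (1 / c₃ * (g Υ / f Υ)) := by field_simp
      _ ≤ f (diam U) * (1 / c₃ * (g Υ / f Υ)) := by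
          gcongr; exact (le_div_iff₀ (hg.pos _ hd)).1 hratio
      _ = _ := by ring
  calc c₂ * D * g (diam U) ≤ c₂ * D * (1 / c₃ * (g Υ / f Υ) * f (diam U)) := by gcongr
    _ = _ := by ring

lemma hMeas_thickening_inter_le (hg : DimFunc g) (hf : DimFunc f) (hD : 1 ≤ D)
    (hgD : DoublingWith g D) (hκ0 : 0 ≤ κ) (hκ1 : κ ≤ 1) (hk₂ : 0 ≤ k₂) {S : Set X}
    (hS : KappaScaling g κ k₁ k₂ S) {Υ : ℝ} (hΥ : 0 < Υ) {U : Set X}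
    (hU : Bornology.IsBounded U) (hΥd : Υ ≤ diam U) (hdT : 2 * diam U < diam (univ : Set X))
    (hΦ : f Υ / g Υ ^ κ ≤ f (diam U) / g (diam U) ^ κ) (hne : (thickening Υ S ∩ U).Nonempty) :
    hMeas g (thickening Υ S ∩ U) ≤ ENNReal.ofReal (k₂ * D * (g Υ / f Υ * f (diam U))) := by
  obtain ⟨y, hyS, hyU⟩ := hne
  obtain ⟨w, hw, hyw⟩ := mem_thickening_iff.1 hyS
  have : Nonempty X := ⟨y⟩
  have hd : 0 < diam U := hΥ.trans_le hΥd
  have hsub : thickening Υ S ∩ U ⊆ ball w (2 * diam U) ∩ thickening Υ S := fun u hu =>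
    ⟨mem_ball.2 <| calc dist u w ≤ dist u y + dist y w := dist_triangle _ _ _
      _ < diam U + Υ := add_lt_add_of_le_of_lt (dist_le_diam_of_mem hU hu.2 hyU) hyw
      _ ≤ 2 * diam U := by linarith, hu.1⟩
  refine (hMeas_mono_s18 hg.map_zero hsub).trans
    ((hS w Υ _ hw hΥ (by linarith) hdT).2.trans (ENNReal.ofReal_le_ofReal ?_))
  have ha := hg.pos Υ hΥ
  have hF := hf.pos Υ hΥ
  have haκ : 0 < g Υ ^ κ := Real.rpow_pos_of_pos ha κ
  have hgdκ : 0 < g (diam U) ^ κ := Real.rpow_pos_of_pos (hg.pos _ hd) κ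
  have hmain : g Υ ^ (1 - κ) * g (diam U) ^ κ ≤ g Υ / f Υ * f (diam U) := by
    rw [Real.rpow_sub ha, Real.rpow_one, div_mul_eq_mul_div, div_mul_eq_mul_div,
      div_le_div_iff₀ haκ hF]
    rw [div_le_div_iff₀ haκ hgdκ] at hΦ
    nlinarith
  calc k₂ * (g Υ ^ (1 - κ) * g (2 * diam U) ^ κ)
      ≤ k₂ * (g Υ ^ (1 - κ) * (D * g (diam U) ^ κ)) := by
        gcongr; exact hgD.rpow_le hg hD hκ0 hκ1 hd
    _ = k₂ * D * (g Υ ^ (1 - κ) * g (diam U) ^ κ) := by ring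
    _ ≤ _ := by gcongr

lemma hMeas_inter_le_of_kappaScaling [Nonempty X] (hg : DimFunc g) (hf : DimFunc f)
    (hΦ : Monotone fun r => f r / g r ^ κ) (hD : 1 < D) (hgD : DoublingWith g D)
    (hAh : AhlforsWith g c₁ c₂ X) (hc₂ : 0 < c₂) (hκ0 : 0 ≤ κ) (hκ1 : κ < 1) (hk₂ : 0 < k₂)
    {c₀ c₃ : ℝ} (hc₀ : 0 < c₀) (hc₃ : 0 < c₃)
    (hfg₀ : ∀ d, 0 < d → d ≤ diam (univ : Set X) → c₀ * g d ≤ f d)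
    (hratio : ∀ d u, 0 < d → d ≤ u → u ≤ diam (univ : Set X) → c₃ * (f u / g u) ≤ f d / g d)
    {S : Set X} (hS : KappaScaling g κ k₁ k₂ S) {z : X} (hz : z ∈ S) {Υ Ub : ℝ} (hΥ : 0 < Υ)
    (hΥUb : Υ < Ub) (hUbT : 2 * Ub < diam (univ : Set X))
    (hid : g Υ ^ (1 - κ) * g Ub ^ κ = g Υ * g Ub / f Υ)
    {U : Set X} (hU : Bornology.IsBounded U) (hd : 0 < diam U)
    (hne : (ball z Ub ∩ thickening Υ S ∩ U).Nonempty) :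
    hMeas g (ball z Ub ∩ thickening Υ S ∩ U) ≤
      ENNReal.ofReal ((c₂ * D / c₃ + k₂ * D + k₂ / c₀) * (g Υ / f Υ * f (diam U))) := by
  have := hf.pos Υ hΥ
  have := hg.pos Υ hΥ
  have := hf.pos _ hd
  have hweak : ∀ {C}, C ≤ c₂ * D / c₃ + k₂ * D + k₂ / c₀ →
      ENNReal.ofReal (C * (g Υ / f Υ * f (diam U))) ≤
        ENNReal.ofReal ((c₂ * D / c₃ + k₂ * D + k₂ / c₀) * (g Υ / f Υ * f (diam U))) :=
    fun h => ENNReal.ofReal_le_ofReal (mul_le_mul_of_nonneg_right h (by positivity))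
  have h₁ : 0 < c₂ * D / c₃ := div_pos (mul_pos hc₂ (by linarith)) hc₃
  have h₂ : 0 < k₂ * D := mul_pos hk₂ (by linarith)
  have h₃ : 0 < k₂ / c₀ := by positivity
  rcases lt_or_ge (diam U) Υ with hsmall | hΥd
  · exact (hMeas_inter_le_of_ratio_le hg hgD hAh hc₂.le (by linarith) hc₃ hΥ hf _ hU hd
      (hratio _ _ hd hsmall.le (by linarith))).trans (hweak (by linarith))
  rcases lt_or_ge (diam U) Ub with hmid | hlarge
  · have hsub : ball z Ub ∩ thickening Υ S ∩ U ⊆ thickening Υ S ∩ U :=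
      inter_subset_inter_left U inter_subset_right
    refine (hMeas_mono_s18 hg.map_zero hsub).trans ((hMeas_thickening_inter_le hg hf hD.le hgD hκ0
      hκ1.le hk₂.le hS hΥ hU hΥd (by linarith) (hΦ hΥd) (hne.mono hsub)).trans ?_)
    exact hweak (by linarith)
  have hb : c₀ * g Ub ≤ f (diam U) := (hfg₀ Ub (hΥ.trans hΥUb) (by linarith)).trans (hf.mono hlarge)
  calc _ ≤ hMeas g (ball z Ub ∩ thickening Υ S) := hMeas_mono_s18 hg.map_zero inter_subset_left
    _ ≤ ENNReal.ofReal (k₂ * (g Υ ^ (1 - κ) * g Ub ^ κ)) :=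
        (hS z Υ Ub hz hΥ hΥUb.le (by linarith)).2
    _ ≤ ENNReal.ofReal (k₂ / c₀ * (g Υ / f Υ * f (diam U))) := by
        refine ENNReal.ofReal_le_ofReal ?_
        rw [hid]
        calc k₂ * (g Υ * g Ub / f Υ) = k₂ / c₀ * (g Υ / f Υ * (c₀ * g Ub)) := by field_simp
          _ ≤ _ := by gcongr
    _ ≤ _ := hweak (by linarith)

lemma exists_pos_mul_hMeas_ball_le_hCont_of_kappaScaling [CompactSpace X] [Nonempty X]
    (hf : DimFunc f) (hg : DimFunc g) (hfg : DimLE f g) (hΦ : Monotone fun r => f r / g r ^ κ)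
    (hD : 1 < D) (hgD : DoublingWith g D) (hAh : AhlforsWith g c₁ c₂ X) (hc₁ : 0 < c₁)
    (hc₂ : 0 < c₂) (hκ0 : 0 ≤ κ) (hκ1 : κ < 1) (hk₁ : 0 < k₁) (hk₂ : 0 < k₂) :
    ∃ C, 0 < C ∧ ∀ (S : Set X) (z : X) (Υ Ub : ℝ), KappaScaling g κ k₁ k₂ S → z ∈ S →
      0 < Υ → Υ < Ub → 2 * Ub < diam (univ : Set X) →
      g Ub = (f Υ / g Υ ^ κ) ^ ((1 : ℝ) / (1 - κ)) →
      ENNReal.ofReal C * hMeas g (ball z Ub) ≤ hCont f (ball z Ub ∩ thickening Υ S) := by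
  have hT := diam_univ_pos hg hAh hc₁
  obtain ⟨c₃, hc₃, hratio⟩ := hfg.exists_pos_mul_div_le_div hf hg hT
  obtain ⟨c₀, hc₀, hfg₀⟩ := hfg.exists_pos_mul_le hf hg hT
  set M := c₂ * D / c₃ + k₂ * D + k₂ / c₀
  have hD0 : 0 < D := by linarith
  have hM : 0 < M := by positivity
  refine ⟨k₁ / (M * c₂), by positivity, fun S z Υ Ub hS hz hΥ hΥUb hUbT hUb => ?_⟩
  have := hf.pos Υ hΥ
  have := hg.pos Υ hΥ
  have hid := rpow_mul_rpow_eq_of_eq_rpow (hg.pos Υ hΥ) (hf.pos Υ hΥ) hκ1 hUb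
  have hK : 0 < M * (g Υ / f Υ) := by positivity
  have hmass := hMeas_le_mul_hCont hg.map_zero subset_rfl hK
    (hMeas_inter_ball_le_of_nondegenerate hg hAh fun x r hd hne => by
      simpa only [mul_assoc] using hMeas_inter_le_of_kappaScaling hg hf hΦ hD hgD hAh hc₂ hκ0
        hκ1 hk₂ hc₀ hc₃ hfg₀ hratio hS hz hΥ hΥUb hUbT hid isBounded_ball hd hne)
  have hlow := (hS z Υ Ub hz hΥ hΥUb.le (by linarith)).1
  rw [hid] at hlow
  calc ENNReal.ofReal (k₁ / (M * c₂)) * hMeas g (ball z Ub)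
      ≤ ENNReal.ofReal (k₁ / (M * c₂) * c₂ * g Ub) :=
        ofReal_mul_hMeas_ball_le hAh (by positivity) (hΥ.trans hΥUb) z
    _ = ENNReal.ofReal (k₁ * (g Υ * g Ub / f Υ)) / ENNReal.ofReal (M * (g Υ / f Υ)) := by
        rw [← ENNReal.ofReal_div_of_pos hK]; congr 1; field_simp
    _ ≤ _ := ENNReal.div_le_of_le_mul (hlow.trans (hmass.trans_eq (mul_comm _ _)))

end

lemma exists_pos_forall_of_eventually {P : ℕ → ℝ → Prop}
    (hP : ∀ n c c', 0 < c → c ≤ c' → P n c' → P n c) (hall : ∀ n, ∃ c, 0 < c ∧ P n c)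
    (hev : ∃ c, 0 < c ∧ ∀ᶠ n in atTop, P n c) : ∃ c, 0 < c ∧ ∀ n, P n c := by
  obtain ⟨c, hc, hev⟩ := hev
  obtain ⟨N, hN⟩ := eventually_atTop.1 hev
  clear hev
  induction N generalizing c with
  | zero => exact ⟨c, hc, fun n => hN n n.zero_le⟩
  | succ N ih =>
    obtain ⟨c', hc', hN'⟩ := hall N
    refine ih (min c c') (lt_min hc hc') fun n hn => ?_
    rcases hn.eq_or_lt with rfl | hlt
    · exact hP _ _ _ (lt_min hc hc') (min_le_right _ _) hN'
    · exact hP n _ _ (lt_min hc hc') (min_le_left _ _) (hN n hlt)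

/-- under the `κ`-scaling property for the resonant sets `R n`, with
`f ⪯ g`, `f/g^κ` a dimension function, and `Ub n = g⁻¹((f(Υ n)/g(Υ n)^κ)^{1/(1-κ)})`,
every set `E_B = 5B ∩ Δ(R n, Υ n)` (with `B` a ball of radius `Ub n` centred on `R n`)
satisfies `H^f_∞(E_B) ≳ H^g(B)` with a constant independent of `n` and `B`. -/
theorem stmt18 {X : Type*} [MetricSpace X] [CompactSpace X]
    (g f : ℝ → ℝ) (D κ : ℝ) (hg : DimFunc g) (hD : 1 < D) (hgD : DoublingWith g D)
    (hAh : Ahlfors g X) (hκ0 : 0 ≤ κ) (hκ1 : κ < 1)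
    (R : ℕ → Set X)
    (hscale : ∃ k₁ k₂ : ℝ, 0 < k₁ ∧ 0 < k₂ ∧ ∀ (n : ℕ) (x : X) (η rad : ℝ),
      x ∈ R n → 0 < η → η ≤ rad → rad < diam (univ : Set X) →
      ENNReal.ofReal (k₁ * (g η ^ (1 - κ) * g rad ^ κ)) ≤
          hMeas g (ball x rad ∩ Metric.thickening η (R n)) ∧
        hMeas g (ball x rad ∩ Metric.thickening η (R n)) ≤
          ENNReal.ofReal (k₂ * (g η ^ (1 - κ) * g rad ^ κ)))
    (hf : DimFunc f) (hfg : DimLE f g)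
    (hfgκ : DimFunc (fun r => f r / g r ^ κ))
    (Υ Ub : ℕ → ℝ) (hΥpos : ∀ n, 0 < Υ n) (hΥ0 : Tendsto Υ atTop (nhds 0))
    (hUbpos : ∀ n, 0 < Ub n)
    (hUb : ∀ n, g (Ub n) = (f (Υ n) / g (Υ n) ^ κ) ^ ((1:ℝ) / (1 - κ))) :
    ∃ Cc : ℝ, 0 < Cc ∧ ∀ (n : ℕ) (z : X), z ∈ R n →
      ENNReal.ofReal Cc * hMeas g (ball z (Ub n)) ≤
        hCont f (ball z (5 * Ub n) ∩ Metric.thickening (Υ n) (R n)) := by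
  obtain ⟨c₁, c₂, hc₁, hc₂, hAh⟩ := hAh
  obtain ⟨k₁, k₂, hk₁, hk₂, hsc⟩ := hscale
  rcases isEmpty_or_nonempty X with hX | hX
  · exact ⟨1, one_pos, fun _ z => isEmptyElim z⟩
  obtain ⟨c, hc, hcball⟩ :=
    exists_pos_mul_le_hCont_ball hf hg hfg (by linarith) hgD hAh hc₁ hc₂
  obtain ⟨C, hC, hres⟩ := exists_pos_mul_hMeas_ball_le_hCont_of_kappaScaling hf hg hfg
    hfgκ.mono hD hgD hAh hc₁ hc₂ hκ0 hκ1 hk₁ hk₂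
  have hE n z : ball z (Ub n) ∩ thickening (Υ n) (R n) ⊆
      ball z (5 * Ub n) ∩ thickening (Υ n) (R n) :=
    inter_subset_inter_left _ (ball_subset_ball (by linarith [hUbpos n]))
  have hcrude n z (hz : z ∈ R n) :=
    (ofReal_mul_hMeas_ball_le_hCont_inter hg hAh hc₂ hc hcball hz (hUbpos n) (hΥpos n)).trans
      (hCont_mono (hE n z))
  have hgUb : Tendsto (fun n => g (Ub n)) atTop (nhds 0) := by
    simpa only [hUb] using hfgκ.tendsto_rpow_comp hΥ0 (one_div_pos.2 (sub_pos.2 hκ1))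
  have hsmall : ∀ᶠ n in atTop, Ub n < diam (univ : Set X) / 2 :=
    hg.eventually_lt_of_tendsto hgUb (half_pos (diam_univ_pos hg hAh hc₁))
  refine exists_pos_forall_of_eventually
    (fun n C C' _ hCC' h z hz => (mul_le_mul_left (ofReal_le_ofReal hCC') _).trans (h z hz))
    (fun n => ⟨_, ?_, hcrude n⟩) ⟨min C (c / c₂), by positivity, hsmall.mono fun n hn z hz => ?_⟩
  · have := hg.pos _ (hUbpos n)
    have := hg.pos _ (lt_min (hUbpos n) (hΥpos n))
    positivity
  rcases lt_or_ge (Υ n) (Ub n) with hΥUb | hUbΥ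
  · exact (mul_le_mul_left (ofReal_le_ofReal (min_le_left _ _)) _).trans
      ((hres _ z _ _ (hsc n) hz (hΥpos n) hΥUb (by linarith) (hUb n)).trans (hCont_mono (hE n z)))
  · have h := hcrude n z hz
    rw [min_eq_left hUbΥ, mul_div_mul_right _ _ (hg.pos _ (hUbpos n)).ne'] at h
    exact (mul_le_mul_left (ofReal_le_ofReal (min_le_right _ _)) _).trans h
end
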